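/- arXiv:1502.07805 — 13 statements merged into one kernel-verified Lean document; each statement's English description precedes it below -/
import Mathlib

section
/- Let 0 < b and let f, g : [0, b) → ℝ be continuous functions with f(0) = g(0) = 0, such that f and g are differentiable at every point of (0, b), g(x) > 0 for all x ∈ (0, b), and g'(x) > 0 for all x ∈ (0, b). If the function x ↦ f'(x)/g'(x) is strictly increasing on (0, b), then the function x ↦ f(x)/g(x) is strictly increasing on (0, b). -/
/-- Classical monotone L'Hôpital rule (increasing form): if `f 0 = g 0 = 0` and
`f'/g'` is strictly increasing on `(0, b)`, then so is `f/g`. -/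
theorem monotone_lhopital_increasing
    (b : ℝ) (hb : 0 < b) (f g : ℝ → ℝ)
    (hfc : ContinuousOn f (Set.Ico 0 b)) (hgc : ContinuousOn g (Set.Ico 0 b))
    (hf0 : f 0 = 0) (hg0 : g 0 = 0)
    (hfd : ∀ x ∈ Set.Ioo 0 b, DifferentiableAt ℝ f x)
    (hgd : ∀ x ∈ Set.Ioo 0 b, DifferentiableAt ℝ g x)
    (hgpos : ∀ x ∈ Set.Ioo 0 b, 0 < g x)
    (hg'pos : ∀ x ∈ Set.Ioo 0 b, 0 < deriv g x)
    (hmono : StrictMonoOn (fun x => deriv f x / deriv g x) (Set.Ioo 0 b)) :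
    StrictMonoOn (fun x => f x / g x) (Set.Ioo 0 b) := by
  have hgmono : StrictMonoOn g (Set.Ico 0 b) := by
    apply strictMonoOn_of_deriv_pos (convex_Ico 0 b) hgc
    rwa [interior_Ico]
  intro x hx y hy hxy
  obtain ⟨hx0, hxb⟩ := hx
  obtain ⟨hy0, hyb⟩ := hy
  have hIxx : Set.Icc (0:ℝ) x ⊆ Set.Ico 0 b := Set.Icc_subset_Ico_iff (le_of_lt hx0) |>.2 ⟨le_rfl, hxb⟩
  have hIxy : Set.Icc x y ⊆ Set.Ico 0 b := Set.Icc_subset_Ico_iff (le_of_lt hxy) |>.2 ⟨le_of_lt hx0, hyb⟩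
  have hsub1 : Set.Ioo (0:ℝ) x ⊆ Set.Ioo 0 b := Set.Ioo_subset_Ioo le_rfl (le_of_lt (lt_trans hxy hyb))
  have hsub2 : Set.Ioo x y ⊆ Set.Ioo 0 b := Set.Ioo_subset_Ioo (le_of_lt hx0) (le_of_lt hyb)
  obtain ⟨c, hc, hceq⟩ := exists_ratio_deriv_eq_ratio_slope f hx0
    (hfc.mono hIxx) (fun z hz => (hfd z (hsub1 hz)).differentiableWithinAt)
    g (hgc.mono hIxx) (fun z hz => (hgd z (hsub1 hz)).differentiableWithinAt)
  obtain ⟨d, hd, hdeq⟩ := exists_ratio_deriv_eq_ratio_slope f hxy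
    (hfc.mono hIxy) (fun z hz => (hfd z (hsub2 hz)).differentiableWithinAt)
    g (hgc.mono hIxy) (fun z hz => (hgd z (hsub2 hz)).differentiableWithinAt)
  have hcb : c ∈ Set.Ioo 0 b := hsub1 hc
  have hdb : d ∈ Set.Ioo 0 b := hsub2 hd
  have hcd : c < d := lt_trans hc.2 hd.1
  have hlt := hmono hcb hdb hcd
  simp only at hlt
  have hgc' := hg'pos c hcb
  have hgd' := hg'pos d hdb
  have hgx := hgpos x ⟨hx0, hxb⟩
  have hgy := hgpos y ⟨hy0, hyb⟩
  have hgxy : g x < g y := hgmono ⟨le_of_lt hx0, hxb⟩ ⟨le_of_lt hy0, hyb⟩ hxy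
  rw [hf0, hg0, sub_zero, sub_zero] at hceq
  -- f x / g x = deriv f c / deriv g c
  have e1 : f x / g x = deriv f c / deriv g c := by
    rw [div_eq_div_iff (ne_of_gt hgx) (ne_of_gt hgc')]
    nlinarith [hceq]
  have e2 : (f y - f x) / (g y - g x) = deriv f d / deriv g d := by
    rw [div_eq_div_iff (by linarith) (ne_of_gt hgd')]
    nlinarith [hdeq]
  have key : f x / g x < (f y - f x) / (g y - g x) := by rw [e1, e2]; exact hlt
  rw [div_lt_div_iff₀ hgx (by linarith)] at key
  show f x / g x < f y / g y
  rw [div_lt_div_iff₀ hgx hgy]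
  nlinarith [key]
end

section
/- Let 0 < b < ∞ and let f, g : (0, b] → ℝ be continuous functions with f(b) = g(b) = 0, such that f and g are differentiable at every point of (0, b), g(x) > 0 for all x ∈ (0, b), and g'(x) < 0 for all x ∈ (0, b). If the function x ↦ f'(x)/g'(x) is strictly increasing on (0, b), then the function x ↦ f(x)/g(x) is strictly increasing on (0, b). -/
/-- Dual form of the monotone L'Hôpital rule: the functions vanish at the right
endpoint `b` and `g` is decreasing. -/
theorem monotone_lhopital_dual
    (b : ℝ) (hb : 0 < b) (f g : ℝ → ℝ)
    (hfc : ContinuousOn f (Set.Ioc 0 b)) (hgc : ContinuousOn g (Set.Ioc 0 b))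
    (hfb : f b = 0) (hgb : g b = 0)
    (hfd : ∀ x ∈ Set.Ioo 0 b, DifferentiableAt ℝ f x)
    (hgd : ∀ x ∈ Set.Ioo 0 b, DifferentiableAt ℝ g x)
    (hgpos : ∀ x ∈ Set.Ioo 0 b, 0 < g x)
    (hg'neg : ∀ x ∈ Set.Ioo 0 b, deriv g x < 0)
    (hmono : StrictMonoOn (fun x => deriv f x / deriv g x) (Set.Ioo 0 b)) :
    StrictMonoOn (fun x => f x / g x) (Set.Ioo 0 b) := by
  -- key: for each x in Ioo 0 b, f'(x)/g'(x) < f(x)/g(x)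
  have key : ∀ x ∈ Set.Ioo 0 b, deriv f x / deriv g x < f x / g x := by
    intro x hx
    obtain ⟨hx0, hxb⟩ := hx
    have hsub : Set.Icc x b ⊆ Set.Ioc 0 b := fun y hy => ⟨lt_of_lt_of_le hx0 hy.1, hy.2⟩
    have hsub' : Set.Ioo x b ⊆ Set.Ioo 0 b := fun y hy => ⟨lt_trans hx0 hy.1, hy.2⟩
    obtain ⟨c, hc, hcc⟩ := exists_ratio_deriv_eq_ratio_slope f hxb (hfc.mono hsub)
      (fun y hy => (hfd y (hsub' hy)).differentiableWithinAt) g (hgc.mono hsub)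
      (fun y hy => (hgd y (hsub' hy)).differentiableWithinAt)
    have hc' : c ∈ Set.Ioo 0 b := hsub' hc
    rw [hfb, hgb, zero_sub, zero_sub, neg_mul, neg_mul, neg_inj] at hcc
    -- hcc : g x * deriv f c = f x * deriv g c
    have hgc0 : deriv g c ≠ 0 := (hg'neg c hc').ne
    have hgx0 : (g x) ≠ 0 := (hgpos x ⟨hx0, hxb⟩).ne'
    have hratio : deriv f c / deriv g c = f x / g x := by
      field_simp
      linarith [hcc]
    calc deriv f x / deriv g x < deriv f c / deriv g c :=
          hmono ⟨hx0, hxb⟩ hc' hc.1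
      _ = f x / g x := hratio
  -- deriv of f/g is positive on Ioo 0 b
  have hderivpos : ∀ x ∈ Set.Ioo 0 b, 0 < deriv (fun y => f y / g y) x := by
    intro x hx
    have hgx : 0 < g x := hgpos x hx
    have hg'x : deriv g x < 0 := hg'neg x hx
    rw [deriv_fun_div (hfd x hx) (hgd x hx) hgx.ne']
    apply div_pos _ (pow_pos hgx 2)
    have h := key x hx
    have h1 : f x / g x * deriv g x < deriv f x := by
      have h2 := mul_lt_mul_of_neg_right h hg'x
      rwa [div_mul_cancel₀ _ hg'x.ne] at h2
    nlinarith [h1, hgx, div_mul_cancel₀ (f x) hgx.ne']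
  have hcont : ContinuousOn (fun y => f y / g y) (Set.Ioo 0 b) := by
    apply ContinuousOn.div
    · exact hfc.mono Set.Ioo_subset_Ioc_self
    · exact hgc.mono Set.Ioo_subset_Ioc_self
    · exact fun x hx => (hgpos x hx).ne'
  exact strictMonoOn_of_deriv_pos (convex_Ioo 0 b) hcont
    (by rwa [interior_Ioo])
end

section
/- Let 0 < b and let f, g : [0, b) → ℝ be differentiable functions such that f and g are positive and strictly increasing on (0, b), g'(x) > 0 on (0, b), and x ↦ f'(x)/g'(x) is positive and strictly increasing on (0, b). Then exactly one of the following holds: (a) x ↦ f(x)/g(x) is strictly increasing on (0, b); (b) x ↦ f(x)/g(x) is strictly decreasing on (0, b); (c) there exists c ∈ (0, b) such that x ↦ f(x)/g(x) is strictly decreasing on (0, c) and strictly increasing on (c, b). -/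
/-- HLP Proposition 148: if `f`, `g` and `f'/g'` are positive increasing, then `f/g`
either increases throughout, or decreases throughout, or decreases to a minimum and
then increases; exactly one of these alternatives holds. -/
theorem hlp_prop_148
    (b : ℝ) (hb : 0 < b) (f g : ℝ → ℝ)
    (hfd : ∀ x ∈ Set.Ico 0 b, DifferentiableAt ℝ f x)
    (hgd : ∀ x ∈ Set.Ico 0 b, DifferentiableAt ℝ g x)
    (hfpos : ∀ x ∈ Set.Ioo 0 b, 0 < f x)
    (hgpos : ∀ x ∈ Set.Ioo 0 b, 0 < g x)
    (hfmono : StrictMonoOn f (Set.Ioo 0 b))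
    (hgmono : StrictMonoOn g (Set.Ioo 0 b))
    (hg'pos : ∀ x ∈ Set.Ioo 0 b, 0 < deriv g x)
    (hratiopos : ∀ x ∈ Set.Ioo 0 b, 0 < deriv f x / deriv g x)
    (hratiomono : StrictMonoOn (fun x => deriv f x / deriv g x) (Set.Ioo 0 b)) :
    (StrictMonoOn (fun x => f x / g x) (Set.Ioo 0 b) ∧
      ¬ StrictAntiOn (fun x => f x / g x) (Set.Ioo 0 b) ∧
      ¬ (∃ c ∈ Set.Ioo 0 b, StrictAntiOn (fun x => f x / g x) (Set.Ioo 0 c) ∧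
          StrictMonoOn (fun x => f x / g x) (Set.Ioo c b))) ∨
    (¬ StrictMonoOn (fun x => f x / g x) (Set.Ioo 0 b) ∧
      StrictAntiOn (fun x => f x / g x) (Set.Ioo 0 b) ∧
      ¬ (∃ c ∈ Set.Ioo 0 b, StrictAntiOn (fun x => f x / g x) (Set.Ioo 0 c) ∧
          StrictMonoOn (fun x => f x / g x) (Set.Ioo c b))) ∨
    (¬ StrictMonoOn (fun x => f x / g x) (Set.Ioo 0 b) ∧
      ¬ StrictAntiOn (fun x => f x / g x) (Set.Ioo 0 b) ∧
      (∃ c ∈ Set.Ioo 0 b, StrictAntiOn (fun x => f x / g x) (Set.Ioo 0 c) ∧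
          StrictMonoOn (fun x => f x / g x) (Set.Ioo c b))) := by
  -- Cauchy mean value theorem: the difference quotient lies strictly between
  -- the derivative ratios at the endpoints.
  have key : ∀ x ∈ Set.Ioo 0 b, ∀ y ∈ Set.Ioo 0 b, x < y →
      ∃ qv, deriv f x / deriv g x < qv ∧ qv < deriv f y / deriv g y ∧
        f y - f x = qv * (g y - g x) := by
    intro x hx y hy hxy
    have hsub : Set.Icc x y ⊆ Set.Ico 0 b := fun z hz =>
      ⟨le_trans hx.1.le hz.1, lt_of_le_of_lt hz.2 hy.2⟩
    have hfc : ContinuousOn f (Set.Icc x y) := fun z hz =>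
      ((hfd z (hsub hz)).continuousAt).continuousWithinAt
    have hgc : ContinuousOn g (Set.Icc x y) := fun z hz =>
      ((hgd z (hsub hz)).continuousAt).continuousWithinAt
    obtain ⟨ξ, hξ, hEq⟩ := exists_ratio_hasDerivAt_eq_ratio_slope f (deriv f) hxy hfc
      (fun z hz => (hfd z (hsub ⟨hz.1.le, hz.2.le⟩)).hasDerivAt)
      g (deriv g) hgc (fun z hz => (hgd z (hsub ⟨hz.1.le, hz.2.le⟩)).hasDerivAt)
    have hξm : ξ ∈ Set.Ioo 0 b := ⟨lt_trans hx.1 hξ.1, lt_trans hξ.2 hy.2⟩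
    refine ⟨deriv f ξ / deriv g ξ, hratiomono hx hξm hξ.1, hratiomono hξm hy hξ.2, ?_⟩
    have hg'ξ : deriv g ξ ≠ 0 := ne_of_gt (hg'pos ξ hξm)
    field_simp
    linear_combination (-1 : ℝ) * hEq
  -- Forward propagation: if f/g ≤ f'/g' at x, then f/g increases after x and stays below f'/g'.
  have F1 : ∀ x ∈ Set.Ioo 0 b, ∀ y ∈ Set.Ioo 0 b, x < y →
      f x / g x ≤ deriv f x / deriv g x →
      f x / g x < f y / g y ∧ f y / g y < deriv f y / deriv g y := by
    intro x hx y hy hxy hle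
    obtain ⟨qv, h1, h2, h3⟩ := key x hx y hy hxy
    have hgx := hgpos x hx
    have hgy := hgpos y hy
    have hgg : g x < g y := hgmono hx hy hxy
    have hfx : f x < qv * g x := by
      have h4 : f x / g x < qv := lt_of_le_of_lt hle h1
      rwa [div_lt_iff₀ hgx] at h4
    have hfy : f y < qv * g y := by nlinarith [h3]
    have hnum : f y * g x - f x * g y = (g y - g x) * (qv * g x - f x) := by
      linear_combination g x * h3
    constructor
    · rw [div_lt_div_iff₀ hgx hgy]
      nlinarith [mul_pos (sub_pos.2 hgg) (sub_pos.2 hfx)]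
    · exact lt_trans ((div_lt_iff₀ hgy).2 hfy) h2
  -- Backward propagation: if f/g ≥ f'/g' at y, then f/g decreases before y and stays above f'/g'.
  have F2 : ∀ x ∈ Set.Ioo 0 b, ∀ y ∈ Set.Ioo 0 b, x < y →
      deriv f y / deriv g y ≤ f y / g y →
      f y / g y < f x / g x ∧ deriv f x / deriv g x < f x / g x := by
    intro x hx y hy hxy hle
    obtain ⟨qv, h1, h2, h3⟩ := key x hx y hy hxy
    have hgx := hgpos x hx
    have hgy := hgpos y hy
    have hgg : g x < g y := hgmono hx hy hxy
    have hfy : qv * g y < f y := by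
      have h4 : qv < f y / g y := lt_of_lt_of_le h2 hle
      rwa [lt_div_iff₀ hgy] at h4
    have hfx : qv * g x < f x := by nlinarith [h3]
    have hnum : f x * g y - f y * g x = (g y - g x) * (f x - qv * g x) := by
      linear_combination (-(g x)) * h3
    constructor
    · rw [div_lt_div_iff₀ hgy hgx]
      nlinarith [mul_pos (sub_pos.2 hgg) (sub_pos.2 hfx)]
    · exact lt_trans h1 ((lt_div_iff₀ hgx).2 hfx)
  by_cases hB : ∃ e ∈ Set.Ioo 0 b, deriv f e / deriv g e ≤ f e / g e
  · by_cases hA : ∃ a ∈ Set.Ioo 0 b, f a / g a < deriv f a / deriv g a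
    · -- both: decreasing then increasing
      obtain ⟨e, he, hqe⟩ := hB
      obtain ⟨a, ha, hqa⟩ := hA
      set B : Set ℝ := {x | x ∈ Set.Ioo 0 b ∧ deriv f x / deriv g x ≤ f x / g x} with hBdef
      have hub : ∀ z ∈ B, z ≤ a := by
        intro z hz
        by_contra hza
        push_neg at hza
        have := (F2 a ha z hz.1 hza hz.2).2
        exact absurd hqa (not_lt.2 this.le)
      have hBne : B.Nonempty := ⟨e, he, hqe⟩
      have hBbd : BddAbove B := ⟨a, fun z hz => hub z hz⟩
      set c := sSup B with hc
      have hce : e ≤ c := le_csSup hBbd ⟨he, hqe⟩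
      have hca : c ≤ a := csSup_le hBne hub
      have hcmem : c ∈ Set.Ioo 0 b := ⟨lt_of_lt_of_le he.1 hce, lt_of_le_of_lt hca ha.2⟩
      have hanti : StrictAntiOn (fun x => f x / g x) (Set.Ioo 0 c) := by
        intro x hx y hy hxy
        have hxb : x ∈ Set.Ioo 0 b := ⟨hx.1, lt_trans hx.2 hcmem.2⟩
        have hyb : y ∈ Set.Ioo 0 b := ⟨hy.1, lt_trans hy.2 hcmem.2⟩
        obtain ⟨z, hzB, hyz⟩ := exists_lt_of_lt_csSup hBne hy.2
        have hy' := (F2 y hyb z hzB.1 hyz hzB.2).2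
        exact (F2 x hxb y hyb hxy hy'.le).1
      have hmono : StrictMonoOn (fun x => f x / g x) (Set.Ioo c b) := by
        intro x hx y hy hxy
        have hxb : x ∈ Set.Ioo 0 b := ⟨lt_trans hcmem.1 hx.1, hx.2⟩
        have hyb : y ∈ Set.Ioo 0 b := ⟨lt_trans hcmem.1 hy.1, hy.2⟩
        have hxnB : f x / g x < deriv f x / deriv g x := by
          by_contra hcon
          push_neg at hcon
          exact absurd (le_csSup hBbd (⟨hxb, hcon⟩ : x ∈ B)) (not_le.2 hx.1)
        exact (F1 x hxb y hyb hxy hxnB.le).1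
      refine Or.inr (Or.inr ⟨?_, ?_, c, hcmem, hanti, hmono⟩)
      · intro hm
        have h1 : c / 2 ∈ Set.Ioo (0:ℝ) c := ⟨by linarith [hcmem.1], by linarith [hcmem.1]⟩
        have h2 : c * 3 / 4 ∈ Set.Ioo (0:ℝ) c := ⟨by linarith [hcmem.1], by linarith [hcmem.1]⟩
        have h1b : c / 2 ∈ Set.Ioo (0:ℝ) b := ⟨h1.1, lt_trans h1.2 hcmem.2⟩
        have h2b : c * 3 / 4 ∈ Set.Ioo (0:ℝ) b := ⟨h2.1, lt_trans h2.2 hcmem.2⟩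
        have hlt : c / 2 < c * 3 / 4 := by linarith [hcmem.1]
        exact absurd (hm h1b h2b hlt) (not_lt.2 (hanti h1 h2 hlt).le)
      · intro hm
        have hcb := hcmem.2
        have h1 : (c + b) / 2 ∈ Set.Ioo c b := ⟨by linarith, by linarith⟩
        have h2 : (c + 3 * b) / 4 ∈ Set.Ioo c b := ⟨by linarith, by linarith⟩
        have h1b : (c + b) / 2 ∈ Set.Ioo (0:ℝ) b := ⟨lt_trans hcmem.1 h1.1, h1.2⟩
        have h2b : (c + 3 * b) / 4 ∈ Set.Ioo (0:ℝ) b := ⟨lt_trans hcmem.1 h2.1, h2.2⟩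
        have hlt : (c + b) / 2 < (c + 3 * b) / 4 := by linarith
        exact absurd (hm h1b h2b hlt) (not_lt.2 (hmono h1 h2 hlt).le)
    · -- no point where f/g < f'/g': decreasing throughout
      push_neg at hA
      have hanti : StrictAntiOn (fun x => f x / g x) (Set.Ioo 0 b) := by
        intro x hx y hy hxy
        exact (F2 x hx y hy hxy (hA y hy)).1
      refine Or.inr (Or.inl ⟨?_, hanti, ?_⟩)
      · intro hm
        have h1 : b / 2 ∈ Set.Ioo (0:ℝ) b := ⟨by linarith, by linarith⟩
        have h2 : b * 3 / 4 ∈ Set.Ioo (0:ℝ) b := ⟨by linarith, by linarith⟩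
        have hlt : b / 2 < b * 3 / 4 := by linarith
        exact absurd (hm h1 h2 hlt) (not_lt.2 (hanti h1 h2 hlt).le)
      · rintro ⟨c, hcmem, -, hm⟩
        have hcb := hcmem.2
        have h1 : (c + b) / 2 ∈ Set.Ioo c b := ⟨by linarith, by linarith⟩
        have h2 : (c + 3 * b) / 4 ∈ Set.Ioo c b := ⟨by linarith, by linarith⟩
        have h1b : (c + b) / 2 ∈ Set.Ioo (0:ℝ) b := ⟨lt_trans hcmem.1 h1.1, h1.2⟩
        have h2b : (c + 3 * b) / 4 ∈ Set.Ioo (0:ℝ) b := ⟨lt_trans hcmem.1 h2.1, h2.2⟩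
        have hlt : (c + b) / 2 < (c + 3 * b) / 4 := by linarith
        exact absurd (hm h1 h2 hlt) (not_lt.2 (hanti h1b h2b hlt).le)
  · -- f/g < f'/g' everywhere: increasing throughout
    push_neg at hB
    have hmono : StrictMonoOn (fun x => f x / g x) (Set.Ioo 0 b) := by
      intro x hx y hy hxy
      exact (F1 x hx y hy hxy (hB x hx).le).1
    refine Or.inl ⟨hmono, ?_, ?_⟩
    · intro ha
      have h1 : b / 2 ∈ Set.Ioo (0:ℝ) b := ⟨by linarith, by linarith⟩
      have h2 : b * 3 / 4 ∈ Set.Ioo (0:ℝ) b := ⟨by linarith, by linarith⟩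
      have hlt : b / 2 < b * 3 / 4 := by linarith
      exact absurd (ha h1 h2 hlt) (not_lt.2 (hmono h1 h2 hlt).le)
    · rintro ⟨c, hcmem, hanti, -⟩
      have hc0 := hcmem.1
      have h1 : c / 2 ∈ Set.Ioo (0:ℝ) c := ⟨by linarith, by linarith⟩
      have h2 : c * 3 / 4 ∈ Set.Ioo (0:ℝ) c := ⟨by linarith, by linarith⟩
      have h1b : c / 2 ∈ Set.Ioo (0:ℝ) b := ⟨h1.1, lt_trans h1.2 hcmem.2⟩
      have h2b : c * 3 / 4 ∈ Set.Ioo (0:ℝ) b := ⟨h2.1, lt_trans h2.2 hcmem.2⟩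
      have hlt : c / 2 < c * 3 / 4 := by linarith
      exact absurd (hanti h1 h2 hlt) (not_lt.2 (hmono h1b h2b hlt).le)
end

section
/- Let 0 < b < ∞ and let p, q : [0, b] → ℝ be continuous functions with q(x) > 0 for all x ∈ [0, b]. If the function x ↦ p(x)/q(x) is strictly increasing on [0, b], then the function x ↦ (∫₀ˣ p(t) dt) / (∫₀ˣ q(t) dt) is strictly increasing on (0, b]. -/
/-- Integral formulation of the monotone L'Hôpital rule: if `p/q` is strictly
increasing, so is `x ↦ (∫₀ˣ p) / (∫₀ˣ q)`. -/
theorem monotone_lhopital_integral_form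
    (b : ℝ) (hb : 0 < b) (p q : ℝ → ℝ)
    (hpc : ContinuousOn p (Set.Icc 0 b)) (hqc : ContinuousOn q (Set.Icc 0 b))
    (hqpos : ∀ x ∈ Set.Icc 0 b, 0 < q x)
    (hmono : StrictMonoOn (fun x => p x / q x) (Set.Icc 0 b)) :
    StrictMonoOn (fun x => (∫ t in (0:ℝ)..x, p t) / (∫ t in (0:ℝ)..x, q t))
      (Set.Ioc 0 b) := by
  intro x hx y hy hxy
  obtain ⟨hx0, hxb⟩ := hx
  obtain ⟨hy0, hyb⟩ := hy
  have hpint : ∀ u v : ℝ, 0 ≤ u → u ≤ v → v ≤ b →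
      IntervalIntegrable p MeasureTheory.volume u v := fun u v hu huv hv =>
    (hpc.mono (by rw [Set.uIcc_of_le huv]; exact Set.Icc_subset_Icc hu hv)).intervalIntegrable
  have hqint : ∀ u v : ℝ, 0 ≤ u → u ≤ v → v ≤ b →
      IntervalIntegrable q MeasureTheory.volume u v := fun u v hu huv hv =>
    (hqc.mono (by rw [Set.uIcc_of_le huv]; exact Set.Icc_subset_Icc hu hv)).intervalIntegrable
  have hxmem : x ∈ Set.Icc (0:ℝ) b := ⟨hx0.le, hxb⟩
  set r : ℝ := p x / q x with hr
  -- positivity of q-integrals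
  have hB : 0 < ∫ t in (0:ℝ)..x, q t := by
    apply intervalIntegral.intervalIntegral_pos_of_pos_on
      (hqint 0 x le_rfl hx0.le hxb)
    · exact fun t ht => hqpos t ⟨ht.1.le, ht.2.le.trans hxb⟩
    · exact hx0
  have hQ : 0 < ∫ t in x..y, q t := by
    apply intervalIntegral.intervalIntegral_pos_of_pos_on
      (hqint x y hx0.le hxy.le hyb)
    · exact fun t ht => hqpos t ⟨hx0.le.trans ht.1.le, ht.2.le.trans hyb⟩
    · exact hxy
  -- Key 1 : ∫₀ˣ p ≤ r * ∫₀ˣ q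
  have key1 : (∫ t in (0:ℝ)..x, p t) ≤ r * ∫ t in (0:ℝ)..x, q t := by
    have h0 : (0:ℝ) ≤ ∫ t in (0:ℝ)..x, (r * q t - p t) := by
      apply intervalIntegral.integral_nonneg hx0.le
      intro t ht
      have htmem : t ∈ Set.Icc (0:ℝ) b := ⟨ht.1, ht.2.trans hxb⟩
      have hqt := hqpos t htmem
      have hdiv : p t / q t ≤ r := hmono.monotoneOn htmem hxmem ht.2
      nlinarith [(div_le_iff₀ hqt).mp hdiv]
    have := intervalIntegral.integral_sub
      ((hqint 0 x le_rfl hx0.le hxb).const_mul r) (hpint 0 x le_rfl hx0.le hxb)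
    rw [this, intervalIntegral.integral_const_mul] at h0
    linarith
  -- Key 2 : r * ∫ₓʸ q < ∫ₓʸ p
  have key2 : r * (∫ t in x..y, q t) < ∫ t in x..y, p t := by
    have h0 : (0:ℝ) < ∫ t in x..y, (p t - r * q t) := by
      apply intervalIntegral.intervalIntegral_pos_of_pos_on
      · exact (hpint x y hx0.le hxy.le hyb).sub
          ((hqint x y hx0.le hxy.le hyb).const_mul r)
      · intro t ht
        have htmem : t ∈ Set.Icc (0:ℝ) b := ⟨hx0.le.trans ht.1.le, ht.2.le.trans hyb⟩
        have hqt := hqpos t htmem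
        have hdiv : r < p t / q t := hmono hxmem htmem ht.1
        nlinarith [(lt_div_iff₀ hqt).mp hdiv]
      · exact hxy
    have := intervalIntegral.integral_sub (hpint x y hx0.le hxy.le hyb)
      ((hqint x y hx0.le hxy.le hyb).const_mul r)
    rw [this, intervalIntegral.integral_const_mul] at h0
    linarith
  -- split the integral up to y
  have hsplitp : (∫ t in (0:ℝ)..y, p t) =
      (∫ t in (0:ℝ)..x, p t) + ∫ t in x..y, p t :=
    (intervalIntegral.integral_add_adjacent_intervals
      (hpint 0 x le_rfl hx0.le hxb) (hpint x y hx0.le hxy.le hyb)).symm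
  have hsplitq : (∫ t in (0:ℝ)..y, q t) =
      (∫ t in (0:ℝ)..x, q t) + ∫ t in x..y, q t :=
    (intervalIntegral.integral_add_adjacent_intervals
      (hqint 0 x le_rfl hx0.le hxb) (hqint x y hx0.le hxy.le hyb)).symm
  simp only [hsplitp, hsplitq]
  rw [div_lt_div_iff₀ hB (by linarith)]
  nlinarith [mul_le_mul_of_nonneg_right key1 hQ.le,
    mul_lt_mul_of_pos_right key2 hB]
end

section
/- Let 0 < b < ∞, let g : [0, b] → ℝ be continuous and strictly increasing with g(0) = 0, and let f : [0, b] → ℝ be continuous with f(0) ≤ 0. If the composite function φ(u) = f(g⁻¹(u)) (where g⁻¹ denotes the inverse of g on [0, g(b)]) is strictly convex on [0, g(b)], then the function x ↦ f(x)/g(x) is strictly increasing on (0, b]. -/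
/-- Generalized monotone rule via change of variable: if `g` is continuous and
strictly increasing with `g 0 = 0`, `f 0 ≤ 0`, and `φ = f ∘ g⁻¹` is strictly convex
on `[0, g b]`, then `f/g` is strictly increasing on `(0, b]`. -/
theorem generalized_monotone_rule
    (b : ℝ) (hb : 0 < b) (f g gInv : ℝ → ℝ)
    (hgc : ContinuousOn g (Set.Icc 0 b))
    (hgmono : StrictMonoOn g (Set.Icc 0 b))
    (hg0 : g 0 = 0)
    (hfc : ContinuousOn f (Set.Icc 0 b))
    (hf0 : f 0 ≤ 0)
    (hInvLeft : ∀ x ∈ Set.Icc 0 b, gInv (g x) = x)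
    (hInvRight : ∀ u ∈ Set.Icc 0 (g b), gInv u ∈ Set.Icc 0 b ∧ g (gInv u) = u)
    (hconv : StrictConvexOn ℝ (Set.Icc 0 (g b)) (fun u => f (gInv u))) :
    StrictMonoOn (fun x => f x / g x) (Set.Ioc 0 b) := by
  intro x hx y hy hxy
  have h0b : (0:ℝ) ∈ Set.Icc (0:ℝ) b := ⟨le_rfl, hb.le⟩
  have hxI : x ∈ Set.Icc (0:ℝ) b := ⟨hx.1.le, hx.2⟩
  have hyI : y ∈ Set.Icc (0:ℝ) b := ⟨hy.1.le, hy.2⟩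
  have hgx : 0 < g x := by
    have := hgmono h0b hxI hx.1
    rwa [hg0] at this
  have hgy : 0 < g y := by
    have := hgmono h0b hyI hy.1
    rwa [hg0] at this
  have hgxy : g x < g y := hgmono hxI hyI hxy
  have hgyb : g y ≤ g b := hgmono.monotoneOn hyI ⟨hb.le, le_rfl⟩ hy.2
  have hgInv0 : gInv 0 = 0 := by
    have := hInvLeft 0 h0b
    rwa [hg0] at this
  set lam := g x / g y with hlam
  have hlam0 : 0 < lam := div_pos hgx hgy
  have hlam1 : lam < 1 := (div_lt_one hgy).2 hgxy
  have h0mem : (0:ℝ) ∈ Set.Icc (0:ℝ) (g b) := ⟨le_rfl, le_trans hgy.le hgyb⟩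
  have hgymem : g y ∈ Set.Icc (0:ℝ) (g b) := ⟨hgy.le, hgyb⟩
  have key := hconv.2 h0mem hgymem (by positivity : (0:ℝ) ≠ g y)
    (show (0:ℝ) < 1 - lam by linarith) (show (0:ℝ) < lam from hlam0)
    (show (1 - lam) + lam = 1 by ring)
  simp only [smul_eq_mul, mul_zero, zero_add] at key
  have hcomb : lam * g y = g x := by
    rw [hlam]; exact div_mul_cancel₀ _ hgy.ne'
  rw [hcomb, hInvLeft x hxI, hgInv0, hInvLeft y hyI] at key
  have : f x < lam * f y := by nlinarith [key]
  simp only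
  rw [div_lt_div_iff₀ hgx hgy]
  calc f x * g y < (lam * f y) * g y := by nlinarith
    _ = f y * g x := by rw [← hcomb]; ring
end

section
/- Let 0 < b < ∞ and let f : [0, b] → ℝ be a continuous function that is strictly convex on [0, b] and satisfies f(0) > 0. Then either the function x ↦ f(x)/x is strictly decreasing on (0, b), or there exists a unique c ∈ (0, b) such that x ↦ f(x)/x is strictly decreasing on (0, c) and strictly increasing on (c, b). -/
/-- Key step: for a strictly convex `f` on `[0,b]` with `f 0 > 0` (not even needed here),
if the chord slope from the origin is nondecreasing from `x` to `y`, it strictly increases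
from `y` to any `z > y`. -/
lemma slope_key_aux (b : ℝ) (f : ℝ → ℝ)
    (hconv : StrictConvexOn ℝ (Set.Icc 0 b) f) {x y z : ℝ}
    (hx : x ∈ Set.Ioo 0 b) (hy : y ∈ Set.Ioo 0 b) (hz : z ∈ Set.Ioo 0 b)
    (hxy : x < y) (hyz : y < z) (h : f x / x ≤ f y / y) : f y / y < f z / z := by
  have hs := hconv.slope_strict_mono_adjacent (x := x) (y := y) (z := z)
    ⟨hx.1.le, hx.2.le⟩ ⟨hz.1.le, hz.2.le⟩ hxy hyz
  have hx0 := hx.1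
  have hy0 := hy.1
  have hz0 := hz.1
  rw [div_le_div_iff₀ hx0 hy0] at h
  rw [div_lt_div_iff₀ hy0 hz0]
  rw [div_lt_div_iff₀ (by linarith : (0:ℝ) < y - x) (by linarith : (0:ℝ) < z - y)] at hs
  have h1 : (f x * y) * (z - y) ≤ (f y * x) * (z - y) :=
    mul_le_mul_of_nonneg_right h (by linarith)
  have h2 : ((f y - f x) * (z - y)) * y < ((f z - f y) * (y - x)) * y :=
    mul_lt_mul_of_pos_right hs hy0
  -- combining: f y * (y - x) * (z - y) < (f z - f y) * (y - x) * y
  have h3 : f y * ((y - x) * (z - y)) < ((f z - f y) * y) * (y - x) := by nlinarith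
  have h4 : f y * (z - y) < (f z - f y) * y := by
    have hyx : (0:ℝ) < y - x := by linarith
    nlinarith [mul_pos hyx (show (0:ℝ) < z - y by linarith)]
  linarith

/-- The case `f 0 > 0` of the monotone rule with `g x = x`: for a continuous,
strictly convex `f` on `[0, b]` with `f 0 > 0`, either `f x / x` is strictly
decreasing on `(0, b)`, or there is a unique turning point `c ∈ (0, b)`. -/
theorem strictConvexOn_pos_initial_value
    (b : ℝ) (hb : 0 < b) (f : ℝ → ℝ)
    (hfc : ContinuousOn f (Set.Icc 0 b))
    (hconv : StrictConvexOn ℝ (Set.Icc 0 b) f)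
    (hf0 : 0 < f 0) :
    StrictAntiOn (fun x => f x / x) (Set.Ioo 0 b) ∨
    (∃! c : ℝ, c ∈ Set.Ioo 0 b ∧
      StrictAntiOn (fun x => f x / x) (Set.Ioo 0 c) ∧
      StrictMonoOn (fun x => f x / x) (Set.Ioo c b)) := by
  have key := fun {x y z} hx hy hz hxy hyz h =>
    slope_key_aux b f hconv (x := x) (y := y) (z := z) hx hy hz hxy hyz h
  by_cases hU : ∀ x ∈ Set.Ioo 0 b, ∀ y ∈ Set.Ioo 0 b, x < y → f y / y < f x / x
  · exact Or.inl fun x hx y hy hxy => hU x hx y hy hxy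
  · right
    push_neg at hU
    obtain ⟨x₀, hx₀, y₀, hy₀, hxy₀, hle₀⟩ := hU
    set U : Set ℝ := {y | y ∈ Set.Ioo 0 b ∧ ∃ x ∈ Set.Ioo 0 b, x < y ∧ f x / x ≤ f y / y}
      with hUdef
    have hy₀U : y₀ ∈ U := ⟨hy₀, x₀, hx₀, hxy₀, hle₀⟩
    -- members of U have strictly smaller values than later points, which are then in U
    have hup : ∀ y ∈ U, ∀ z ∈ Set.Ioo 0 b, y < z → f y / y < f z / z := by
      rintro y ⟨hy, x, hx, hxy, hle⟩ z hz hyz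
      exact key hx hy hz hxy hyz hle
    have hupU : ∀ y ∈ U, ∀ z ∈ Set.Ioo 0 b, y < z → z ∈ U := by
      intro y hyU z hz hyz
      exact ⟨hz, y, hyU.1, hyz, (hup y hyU z hz hyz).le⟩
    -- find δ > 0 below which f x / x > f y₀ / y₀
    have hcont : ContinuousWithinAt f (Set.Icc 0 b) 0 := hfc 0 ⟨le_refl 0, hb.le⟩
    rw [Metric.continuousWithinAt_iff] at hcont
    obtain ⟨δ₀, hδ₀, hδ₀prop⟩ := hcont (f 0 / 2) (by linarith)
    set M := f y₀ / y₀ with hM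
    set δ : ℝ := min δ₀ (min y₀ (f 0 / (2 * (|M| + 1)))) with hδdef
    have hMabs : (0:ℝ) < |M| + 1 := by positivity
    have hδpos : 0 < δ := by
      apply lt_min hδ₀
      exact lt_min hy₀.1 (by positivity)
    have hδy₀ : δ ≤ y₀ := le_trans (min_le_right _ _) (min_le_left _ _)
    have hsmall : ∀ x ∈ Set.Ioo 0 δ, M < f x / x := by
      intro x hx
      have hx0 := hx.1
      have hxδ := hx.2
      have hxb : x < b := lt_of_lt_of_le hxδ (hδy₀.trans hy₀.2.le)
      have hdist : dist x 0 < δ₀ := by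
        rw [Real.dist_eq, sub_zero, abs_of_pos hx0]
        exact hxδ.trans_le (min_le_left _ _)
      have hfx := hδ₀prop ⟨hx0.le, hxb.le⟩ hdist
      rw [Real.dist_eq] at hfx
      have hfx2 : f 0 / 2 < f x := by
        cases abs_lt.mp hfx with
        | intro h1 h2 => linarith
      have hxsmall : x < f 0 / (2 * (|M| + 1)) :=
        hxδ.trans_le ((min_le_right _ _).trans (min_le_right _ _))
      rw [lt_div_iff₀ hx0]
      have h1 : M * x ≤ (|M| + 1) * x :=
        mul_le_mul_of_nonneg_right (by linarith [le_abs_self M]) hx0.le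
      have h2 : (|M| + 1) * x < (|M| + 1) * (f 0 / (2 * (|M| + 1))) :=
        mul_lt_mul_of_pos_left hxsmall hMabs
      have h3 : (|M| + 1) * (f 0 / (2 * (|M| + 1))) = f 0 / 2 := by
        field_simp
      linarith
    -- δ is a lower bound of U
    have hlb : ∀ y ∈ U, δ ≤ y := by
      intro y hyU
      by_contra hcon
      push_neg at hcon
      rcases le_or_gt y₀ y with h1 | h1
      · exact absurd (hδy₀.trans h1) (not_le.mpr hcon)
      · have := hup y hyU y₀ hy₀ h1
        have := hsmall y ⟨hyU.1.1, hcon⟩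
        linarith
    have hUne : U.Nonempty := ⟨y₀, hy₀U⟩
    have hbdd : BddBelow U := ⟨δ, hlb⟩
    set c := sInf U with hc
    have hcδ : δ ≤ c := le_csInf hUne hlb
    have hcy₀ : c ≤ y₀ := csInf_le hbdd hy₀U
    have hcmem : c ∈ Set.Ioo 0 b := ⟨lt_of_lt_of_le hδpos hcδ, lt_of_le_of_lt hcy₀ hy₀.2⟩
    -- points above c are in U
    have habove : ∀ y ∈ Set.Ioo c b, y ∈ U := by
      intro y hy
      have : ∃ u ∈ U, u < y := by
        by_contra hcon
        push_neg at hcon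
        exact absurd (le_csInf hUne hcon) (not_le.mpr hy.1)
      obtain ⟨u, huU, huy⟩ := this
      exact hupU u huU y ⟨lt_trans (lt_of_lt_of_le hδpos (hlb u huU)) huy, hy.2⟩ huy
    refine ⟨c, ⟨hcmem, ?_, ?_⟩, ?_⟩
    · -- strictly decreasing on (0, c)
      intro x hx y hy hxy
      simp only
      by_contra hcon
      push_neg at hcon
      have hyb : y ∈ Set.Ioo 0 b := ⟨hy.1, hy.2.trans hcmem.2⟩
      have hxb : x ∈ Set.Ioo 0 b := ⟨hx.1, hxy.trans hyb.2⟩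
      have : y ∈ U := ⟨hyb, x, hxb, hxy, hcon⟩
      exact absurd (csInf_le hbdd this) (not_le.mpr hy.2)
    · -- strictly increasing on (c, b)
      intro y hy z hz hyz
      simp only
      have hyU := habove y hy
      exact hup y hyU z ⟨lt_trans hyU.1.1 hyz, hz.2⟩ hyz
    · -- uniqueness
      rintro c' ⟨hc'mem, hanti', hmono'⟩
      by_contra hne
      rcases lt_or_gt_of_ne hne with hlt | hlt
      · -- c' < c : use our anti on (0,c) and their mono on (c',b)
        set p := c' + (c - c') / 3 with hp
        set q := c' + 2 * ((c - c') / 3) with hq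
        have hpq : p < q := by simp only [hp, hq]; linarith
        have hpmem : p ∈ Set.Ioo 0 c := ⟨by simp only [hp]; linarith [hc'mem.1], by simp only [hp]; linarith⟩
        have hqmem : q ∈ Set.Ioo 0 c := ⟨by simp only [hq]; linarith [hc'mem.1], by simp only [hq]; linarith⟩
        have hpmem' : p ∈ Set.Ioo c' b := ⟨by simp only [hp]; linarith, hpmem.2.trans hcmem.2⟩
        have hqmem' : q ∈ Set.Ioo c' b := ⟨by simp only [hq]; linarith, hqmem.2.trans hcmem.2⟩
        have h1 : f q / q < f p / p := by
          have hanti : ∀ x ∈ Set.Ioo (0:ℝ) c, ∀ y ∈ Set.Ioo (0:ℝ) c, x < y → f y / y < f x / x := by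
            intro x hx y hy hxy
            by_contra hcon
            push_neg at hcon
            have hyb : y ∈ Set.Ioo 0 b := ⟨hy.1, hy.2.trans hcmem.2⟩
            have hxb : x ∈ Set.Ioo 0 b := ⟨hx.1, hxy.trans hyb.2⟩
            exact absurd (csInf_le hbdd ⟨hyb, x, hxb, hxy, hcon⟩) (not_le.mpr hy.2)
          exact hanti p hpmem q hqmem hpq
        have h2 : f p / p < f q / q := hmono' hpmem' hqmem' hpq
        linarith
      · -- c < c' : use our mono on (c,b) and their anti on (0,c')
        set p := c + (c' - c) / 3 with hp
        set q := c + 2 * ((c' - c) / 3) with hq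
        have hpq : p < q := by simp only [hp, hq]; linarith
        have hpmem : p ∈ Set.Ioo c b := ⟨by simp only [hp]; linarith, by simp only [hp]; nlinarith [hc'mem.2]⟩
        have hqmem : q ∈ Set.Ioo c b := ⟨by simp only [hq]; linarith, by simp only [hq]; nlinarith [hc'mem.2]⟩
        have hpmem' : p ∈ Set.Ioo 0 c' := ⟨lt_trans hcmem.1 hpmem.1, by simp only [hp]; linarith⟩
        have hqmem' : q ∈ Set.Ioo 0 c' := ⟨lt_trans hcmem.1 hqmem.1, by simp only [hq]; linarith⟩
        have h1 : f p / p < f q / q := by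
          have hpU := habove p hpmem
          exact hup p hpU q ⟨hqmem'.1, hqmem.2⟩ hpq
        have h2 : f q / q < f p / p := hanti' hpmem' hqmem' hpq
        linarith
end

section
/- Let 0 < b < ∞ and let f, g : [0, b] → ℝ be differentiable functions with g(x) > 0 and g'(x) > 0 on [0, b], and suppose x ↦ f'(x)/g'(x) is strictly increasing on [0, b]. If f(0)/g(0) ≤ f'(0)/g'(0), then the function x ↦ f(x)/g(x) is strictly increasing on [0, b]. -/
/-- Corollary 1, case (2)(i): if `f'/g'` is strictly increasing on `[0, b]` and
`f 0 / g 0 ≤ f' 0 / g' 0`, then `f/g` is strictly increasing on `[0, b]`. -/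
theorem corollary1_case2i
    (b : ℝ) (hb : 0 < b) (f g : ℝ → ℝ)
    (hfd : ∀ x ∈ Set.Icc 0 b, DifferentiableAt ℝ f x)
    (hgd : ∀ x ∈ Set.Icc 0 b, DifferentiableAt ℝ g x)
    (hgpos : ∀ x ∈ Set.Icc 0 b, 0 < g x)
    (hg'pos : ∀ x ∈ Set.Icc 0 b, 0 < deriv g x)
    (hmono : StrictMonoOn (fun x => deriv f x / deriv g x) (Set.Icc 0 b))
    (hbc : f 0 / g 0 ≤ deriv f 0 / deriv g 0) :
    StrictMonoOn (fun x => f x / g x) (Set.Icc 0 b) := by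
  have hfc : ContinuousOn f (Set.Icc 0 b) := fun x hx =>
    (hfd x hx).continuousAt.continuousWithinAt
  have hgc : ContinuousOn g (Set.Icc 0 b) := fun x hx =>
    (hgd x hx).continuousAt.continuousWithinAt
  have h0mem : (0:ℝ) ∈ Set.Icc (0:ℝ) b := ⟨le_refl _, hb.le⟩
  have hgmono : StrictMonoOn g (Set.Icc 0 b) := by
    apply strictMonoOn_of_deriv_pos (convex_Icc 0 b) hgc
    intro x hx
    rw [interior_Icc] at hx
    exact hg'pos x ⟨hx.1.le, hx.2.le⟩
  have key : ∀ x ∈ Set.Ioo (0:ℝ) b, f x * deriv g x < deriv f x * g x := by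
    intro x hx
    have hxmem : x ∈ Set.Icc (0:ℝ) b := ⟨hx.1.le, hx.2.le⟩
    obtain ⟨c, hc, hcc⟩ := exists_ratio_hasDerivAt_eq_ratio_slope f (deriv f)
      (a := 0) (b := x) hx.1
      (hfc.mono (Set.Icc_subset_Icc le_rfl hx.2.le))
      (fun y hy => (hfd y ⟨hy.1.le, hy.2.le.trans hx.2.le⟩).hasDerivAt)
      g (deriv g)
      (hgc.mono (Set.Icc_subset_Icc le_rfl hx.2.le))
      (fun y hy => (hgd y ⟨hy.1.le, hy.2.le.trans hx.2.le⟩).hasDerivAt)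
    have hcmem : c ∈ Set.Icc (0:ℝ) b := ⟨hc.1.le, hc.2.le.trans hx.2.le⟩
    have hg'c : 0 < deriv g c := hg'pos c hcmem
    have hg'x : 0 < deriv g x := hg'pos x hxmem
    have hg'0 : 0 < deriv g 0 := hg'pos 0 h0mem
    have hg0 : 0 < g 0 := hgpos 0 h0mem
    have hgx : 0 < g x := hgpos x hxmem
    have hgd0 : g 0 < g x := hgmono h0mem hxmem hx.1
    have hB : deriv f c * deriv g x < deriv f x * deriv g c := by
      have := hmono hcmem hxmem hc.2
      simp only at this
      exact (div_lt_div_iff₀ hg'c hg'x).mp this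
    have hC : deriv f 0 * deriv g x < deriv f x * deriv g 0 := by
      have := hmono h0mem hxmem hx.1
      simp only at this
      exact (div_lt_div_iff₀ hg'0 hg'x).mp this
    have hD : f 0 * deriv g 0 ≤ deriv f 0 * g 0 :=
      (div_le_div_iff₀ hg0 hg'0).mp hbc
    -- From hcc, hB: (f x - f 0) * deriv g x < (g x - g 0) * deriv f x
    have h1 : (f x - f 0) * deriv g x < (g x - g 0) * deriv f x := by
      have h2 : (g x - g 0) * (deriv f c * deriv g x) <
          (g x - g 0) * (deriv f x * deriv g c) :=
        mul_lt_mul_of_pos_left hB (by linarith)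
      rw [show (g x - g 0) * (deriv f c * deriv g x)
          = ((g x - g 0) * deriv f c) * deriv g x by ring, hcc] at h2
      have := (mul_lt_mul_iff_left₀ hg'c).mp (by nlinarith : (f x - f 0) * deriv g x * deriv g c < (g x - g 0) * deriv f x * deriv g c)
      exact this
    have h3 : f 0 * deriv g x < deriv f x * g 0 := by
      have h4 : f 0 * deriv g 0 * deriv g x ≤ deriv f 0 * g 0 * deriv g x :=
        mul_le_mul_of_nonneg_right hD hg'x.le
      nlinarith
    nlinarith
  have hder : ∀ x ∈ Set.Icc (0:ℝ) b,
      HasDerivAt (fun y => f y / g y)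
        ((deriv f x * g x - f x * deriv g x) / g x ^ 2) x := fun x hx =>
    (hfd x hx).hasDerivAt.div (hgd x hx).hasDerivAt (hgpos x hx).ne'
  apply strictMonoOn_of_deriv_pos (convex_Icc 0 b)
    (hfc.div hgc fun x hx => (hgpos x hx).ne')
  intro x hx
  rw [interior_Icc] at hx
  have hxmem : x ∈ Set.Icc (0:ℝ) b := ⟨hx.1.le, hx.2.le⟩
  show 0 < deriv (fun y => f y / g y) x
  rw [(hder x hxmem).deriv]
  have := key x hx
  have hgx : 0 < g x := hgpos x hxmem
  exact div_pos (by linarith) (by positivity)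
end

section
/- Let 0 < b < ∞ and let f, g : [0, b] → ℝ be differentiable functions with g(x) > 0 and g'(x) > 0 on [0, b], and suppose x ↦ f'(x)/g'(x) is strictly increasing on [0, b]. If f(b)/g(b) ≥ f'(b)/g'(b), then the function x ↦ f(x)/g(x) is strictly decreasing on [0, b]. -/
/-- Corollary 1, case (2)(ii): if `f'/g'` is strictly increasing on `[0, b]` and
`f b / g b ≥ f' b / g' b`, then `f/g` is strictly decreasing on `[0, b]`. -/
theorem corollary1_case2ii
    (b : ℝ) (hb : 0 < b) (f g : ℝ → ℝ)
    (hfd : ∀ x ∈ Set.Icc 0 b, DifferentiableAt ℝ f x)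
    (hgd : ∀ x ∈ Set.Icc 0 b, DifferentiableAt ℝ g x)
    (hgpos : ∀ x ∈ Set.Icc 0 b, 0 < g x)
    (hg'pos : ∀ x ∈ Set.Icc 0 b, 0 < deriv g x)
    (hmono : StrictMonoOn (fun x => deriv f x / deriv g x) (Set.Icc 0 b))
    (hbc : f b / g b ≥ deriv f b / deriv g b) :
    StrictAntiOn (fun x => f x / g x) (Set.Icc 0 b) := by
  set c := deriv f b / deriv g b with hc
  have hbmem : b ∈ Set.Icc (0:ℝ) b := ⟨le_of_lt hb, le_refl b⟩
  have hcf : ContinuousOn f (Set.Icc 0 b) :=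
    fun x hx => (hfd x hx).continuousAt.continuousWithinAt
  have hcg : ContinuousOn g (Set.Icc 0 b) :=
    fun x hx => (hgd x hx).continuousAt.continuousWithinAt
  have hanti : StrictAntiOn (fun x => f x - c * g x) (Set.Icc 0 b) := by
    apply strictAntiOn_of_deriv_neg (convex_Icc 0 b)
    · exact hcf.sub (continuousOn_const.mul hcg)
    · intro x hx
      rw [interior_Icc] at hx
      have hx' : x ∈ Set.Icc (0:ℝ) b := ⟨le_of_lt hx.1, le_of_lt hx.2⟩
      rw [deriv_fun_sub (hfd x hx') ((hgd x hx').const_mul c), deriv_const_mul _ (hgd x hx')]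
      have hlt : deriv f x / deriv g x < c := hmono hx' hbmem hx.2
      have hg' := hg'pos x hx'
      have : deriv f x < c * deriv g x := by
        rw [div_lt_iff₀ hg'] at hlt; linarith
      linarith
  have key : ∀ x ∈ Set.Icc (0:ℝ) b, x < b → c * g x < f x := by
    intro x hx hxb
    have h1 : f b - c * g b ≥ 0 := by
      have : c ≤ f b / g b := hbc
      rw [le_div_iff₀ (hgpos b hbmem)] at this
      linarith
    have h2 := hanti hx hbmem hxb
    simp only at h2
    linarith
  apply strictAntiOn_of_deriv_neg (convex_Icc 0 b)
  · exact hcf.div hcg (fun x hx => (hgpos x hx).ne')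
  · intro x hx
    rw [interior_Icc] at hx
    have hx' : x ∈ Set.Icc (0:ℝ) b := ⟨le_of_lt hx.1, le_of_lt hx.2⟩
    rw [deriv_fun_div (hfd x hx') (hgd x hx') (hgpos x hx').ne']
    apply div_neg_of_neg_of_pos
    · have hlt : deriv f x / deriv g x < c := hmono hx' hbmem hx.2
      have hg' := hg'pos x hx'
      have h1 : deriv f x < c * deriv g x := by
        rw [div_lt_iff₀ hg'] at hlt; linarith
      have h2 : c * g x < f x := key x hx' hx.2
      nlinarith [hgpos x hx']
    · exact pow_pos (hgpos x hx') 2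
end

section
/- Let 0 < b < ∞ and let f, g : [0, b] → ℝ be differentiable functions with g(x) > 0 and g'(x) > 0 on [0, b], and suppose x ↦ f'(x)/g'(x) is strictly increasing on [0, b]. If f(0)/g(0) > f'(0)/g'(0) and f(b)/g(b) < f'(b)/g'(b), then there exists a unique c ∈ (0, b) such that x ↦ f(x)/g(x) is strictly decreasing on (0, c) and strictly increasing on (c, b). -/
open Set Filter Topology

private lemma deriv_nonneg_of_slope {h : ℝ → ℝ} {L x : ℝ}
    (hd : HasDerivAt h L x) {l : Filter ℝ} [l.NeBot] (hl : l ≤ 𝓝[≠] x)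
    (hsl : ∀ᶠ y in l, 0 ≤ slope h x y) : 0 ≤ L :=
  ge_of_tendsto ((hasDerivAt_iff_tendsto_slope.1 hd).mono_left hl) hsl

private lemma deriv_nonpos_of_slope {h : ℝ → ℝ} {L x : ℝ}
    (hd : HasDerivAt h L x) {l : Filter ℝ} [l.NeBot] (hl : l ≤ 𝓝[≠] x)
    (hsl : ∀ᶠ y in l, slope h x y ≤ 0) : L ≤ 0 :=
  le_of_tendsto ((hasDerivAt_iff_tendsto_slope.1 hd).mono_left hl) hsl

/-- Corollary 1, case (2)(iii): if `f'/g'` is strictly increasing on `[0, b]`,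
`f 0 / g 0 > f' 0 / g' 0` and `f b / g b < f' b / g' b`, then `f/g` has the shape
decreasing-then-increasing with a unique turning point in `(0, b)`. -/
theorem corollary1_case2iii
    (b : ℝ) (hb : 0 < b) (f g : ℝ → ℝ)
    (hfd : ∀ x ∈ Set.Icc 0 b, DifferentiableAt ℝ f x)
    (hgd : ∀ x ∈ Set.Icc 0 b, DifferentiableAt ℝ g x)
    (hgpos : ∀ x ∈ Set.Icc 0 b, 0 < g x)
    (hg'pos : ∀ x ∈ Set.Icc 0 b, 0 < deriv g x)
    (hmono : StrictMonoOn (fun x => deriv f x / deriv g x) (Set.Icc 0 b))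
    (hbc0 : f 0 / g 0 > deriv f 0 / deriv g 0)
    (hbcb : f b / g b < deriv f b / deriv g b) :
    ∃! c : ℝ, c ∈ Set.Ioo 0 b ∧
      StrictAntiOn (fun x => f x / g x) (Set.Ioo 0 c) ∧
      StrictMonoOn (fun x => f x / g x) (Set.Ioo c b) := by
  set h : ℝ → ℝ := fun x => f x / g x with hh
  set φ : ℝ → ℝ := fun x => deriv f x / deriv g x with hφ
  have h0mem : (0:ℝ) ∈ Icc 0 b := left_mem_Icc.2 hb.le
  have hbmem : b ∈ Icc 0 b := right_mem_Icc.2 hb.le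
  have hgne : ∀ x ∈ Icc 0 b, g x ≠ 0 := fun x hx => (hgpos x hx).ne'
  have hg'ne : ∀ x ∈ Icc 0 b, deriv g x ≠ 0 := fun x hx => (hg'pos x hx).ne'
  have hcf : ContinuousOn f (Icc 0 b) := fun x hx => (hfd x hx).continuousAt.continuousWithinAt
  have hcg : ContinuousOn g (Icc 0 b) := fun x hx => (hgd x hx).continuousAt.continuousWithinAt
  have hch : ContinuousOn h (Icc 0 b) := hcf.div hcg hgne
  -- derivative of h
  have hderiv : ∀ x ∈ Icc 0 b, HasDerivAt h (deriv g x / g x * (φ x - h x)) x := by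
    intro x hx
    have hf' := (hfd x hx).hasDerivAt
    have hg' := (hgd x hx).hasDerivAt
    have hd : HasDerivAt (fun y => f y / g y) _ x := hf'.div hg' (hgne x hx)
    convert hd using 1
    have h1 : g x ≠ 0 := hgne x hx
    have h2 : deriv g x ≠ 0 := hg'ne x hx
    show deriv g x / g x * (deriv f x / deriv g x - f x / g x) = _
    field_simp
  -- g is strictly increasing
  have hgmono : StrictMonoOn g (Icc 0 b) := by
    apply strictMonoOn_of_deriv_pos (convex_Icc 0 b) hcg
    intro x hx
    rw [interior_Icc] at hx
    exact hg'pos x (Ioo_subset_Icc_self hx)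
  -- key "one-way" lemma via Cauchy MVT
  have key : ∀ x x₀, x ∈ Icc 0 b → x₀ ∈ Icc 0 b → x < x₀ → φ x₀ ≤ h x₀ → φ x < h x := by
    intro x x₀ hx hx₀ hlt hle
    have hsub : Icc x x₀ ⊆ Icc 0 b := Icc_subset_Icc hx.1 hx₀.2
    have hsub' : Ioo x x₀ ⊆ Icc 0 b := fun y hy => hsub (Ioo_subset_Icc_self hy)
    obtain ⟨ξ, hξ, heq⟩ :=
      exists_ratio_hasDerivAt_eq_ratio_slope f (deriv f) hlt (hcf.mono hsub)
        (fun y hy => (hfd y (hsub' hy)).hasDerivAt) g (deriv g) (hcg.mono hsub)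
        (fun y hy => (hgd y (hsub' hy)).hasDerivAt)
    have hξI : ξ ∈ Icc 0 b := hsub' hξ
    have hgdiff : 0 < g x₀ - g x := sub_pos.2 (hgmono hx hx₀ hlt)
    have hr : f x₀ - f x = (g x₀ - g x) * (deriv f ξ / deriv g ξ) := by
      field_simp [hg'ne ξ hξI]
      linarith [heq]
    have h1 : deriv f ξ / deriv g ξ < φ x₀ := hmono hξI hx₀ hξ.2
    have h2 : deriv f ξ / deriv g ξ < h x₀ := h1.trans_le hle
    have hfx₀ : f x₀ = h x₀ * g x₀ := by
      simp only [hh]; exact (div_mul_cancel₀ _ (hgne x₀ hx₀)).symm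
    have hfx : h x₀ * g x < f x := by nlinarith
    have hhx : h x₀ < h x := by
      simp only [hh] at hfx ⊢
      rw [lt_div_iff₀ (hgpos x hx)]
      exact hfx
    have h3 : φ x < φ x₀ := hmono hx hx₀ hlt
    linarith
  -- the turning point
  set S : Set ℝ := {x | x ∈ Icc 0 b ∧ φ x ≤ h x} with hS
  have hS0 : (0:ℝ) ∈ S := ⟨h0mem, hbc0.le⟩
  have hSne : S.Nonempty := ⟨0, hS0⟩
  have hSbd : BddAbove S := ⟨b, fun x hx => hx.1.2⟩
  set c : ℝ := sSup S with hc
  have hc0 : 0 ≤ c := le_csSup hSbd hS0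
  have hcble : c ≤ b := csSup_le hSne fun x hx => hx.1.2
  have hneg : ∀ x ∈ Icc 0 b, x < c → φ x < h x := by
    intro x hx hxc
    obtain ⟨x₀, hx₀S, hxx₀⟩ := exists_lt_of_lt_csSup hSne hxc
    exact key x x₀ hx hx₀S.1 hxx₀ hx₀S.2
  have hpos : ∀ x ∈ Icc 0 b, c < x → h x < φ x := by
    intro x hx hcx
    by_contra hcon
    push_neg at hcon
    exact absurd (le_csSup hSbd ⟨hx, hcon⟩) (not_le.2 hcx)
  -- deriv sign facts restated
  have hderivneg : ∀ x ∈ Icc 0 b, φ x < h x → deriv h x < 0 := by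
    intro x hx hlt
    rw [(hderiv x hx).deriv]
    exact mul_neg_of_pos_of_neg (div_pos (hg'pos x hx) (hgpos x hx)) (sub_neg.2 hlt)
  have hderivpos : ∀ x ∈ Icc 0 b, h x < φ x → 0 < deriv h x := by
    intro x hx hlt
    rw [(hderiv x hx).deriv]
    exact mul_pos (div_pos (hg'pos x hx) (hgpos x hx)) (sub_pos.2 hlt)
  -- c ≠ 0
  have hc_ne_0 : c ≠ 0 := by
    intro hceq
    have hmonoh : StrictMonoOn h (Icc 0 b) := by
      apply strictMonoOn_of_deriv_pos (convex_Icc 0 b) hch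
      intro x hx
      rw [interior_Icc] at hx
      have hxI : x ∈ Icc 0 b := Ioo_subset_Icc_self hx
      exact hderivpos x hxI (hpos x hxI (hceq ▸ hx.1))
    have hL : HasDerivAt h (deriv g 0 / g 0 * (φ 0 - h 0)) 0 := hderiv 0 h0mem
    have hLneg : deriv g 0 / g 0 * (φ 0 - h 0) < 0 :=
      mul_neg_of_pos_of_neg (div_pos (hg'pos 0 h0mem) (hgpos 0 h0mem)) (sub_neg.2 hbc0)
    have : (0:ℝ) ≤ deriv g 0 / g 0 * (φ 0 - h 0) := by
      refine deriv_nonneg_of_slope (l := 𝓝[>] (0:ℝ)) hL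
        (nhdsWithin_mono 0 fun y hy => ne_of_gt hy) ?_
      · filter_upwards [Ioo_mem_nhdsGT_of_mem (⟨le_refl 0, hb⟩ : (0:ℝ) ∈ Ico 0 b)] with y hy
        have h1 : h 0 < h y := hmonoh h0mem (Ioo_subset_Icc_self hy) hy.1
        rw [slope_def_field]
        apply le_of_lt
        exact div_pos (by linarith) (by linarith [hy.1])
    linarith
  -- c ≠ b
  have hc_ne_b : c ≠ b := by
    intro hceq
    have hantih : StrictAntiOn h (Icc 0 b) := by
      apply strictAntiOn_of_deriv_neg (convex_Icc 0 b) hch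
      intro x hx
      rw [interior_Icc] at hx
      have hxI : x ∈ Icc 0 b := Ioo_subset_Icc_self hx
      exact hderivneg x hxI (hneg x hxI (hceq ▸ hx.2))
    have hL : HasDerivAt h (deriv g b / g b * (φ b - h b)) b := hderiv b hbmem
    have hLpos : 0 < deriv g b / g b * (φ b - h b) :=
      mul_pos (div_pos (hg'pos b hbmem) (hgpos b hbmem)) (sub_pos.2 hbcb)
    have : deriv g b / g b * (φ b - h b) ≤ 0 := by
      refine deriv_nonpos_of_slope (l := 𝓝[<] b) hL
        (nhdsWithin_mono b fun y hy => ne_of_lt hy) ?_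
      · filter_upwards [Ioo_mem_nhdsLT_of_mem (⟨hb, le_refl b⟩ : b ∈ Ioc 0 b)] with y hy
        have h1 : h b < h y := hantih (Ioo_subset_Icc_self hy) hbmem hy.2
        rw [slope_def_field]
        apply le_of_lt
        exact div_neg_of_pos_of_neg (by linarith) (by linarith [hy.2])
    linarith
  have hcmem : c ∈ Ioo 0 b := ⟨hc0.lt_of_ne (Ne.symm hc_ne_0), hcble.lt_of_ne hc_ne_b⟩
  -- existence
  have hIoo0c : Ioo 0 c ⊆ Icc 0 b := fun y hy => ⟨hy.1.le, (hy.2.trans_le hcble).le⟩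
  have hIoocb : Ioo c b ⊆ Icc 0 b := fun y hy => ⟨hc0.trans hy.1.le, hy.2.le⟩
  have hanti : StrictAntiOn h (Ioo 0 c) := by
    apply strictAntiOn_of_deriv_neg (convex_Ioo 0 c) (hch.mono hIoo0c)
    intro x hx
    rw [interior_Ioo] at hx
    exact hderivneg x (hIoo0c hx) (hneg x (hIoo0c hx) hx.2)
  have hmonoh : StrictMonoOn h (Ioo c b) := by
    apply strictMonoOn_of_deriv_pos (convex_Ioo c b) (hch.mono hIoocb)
    intro x hx
    rw [interior_Ioo] at hx
    exact hderivpos x (hIoocb hx) (hpos x (hIoocb hx) hx.1)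
  refine ⟨c, ⟨hcmem, hanti, hmonoh⟩, ?_⟩
  -- uniqueness
  rintro c' ⟨hc'mem, hanti', hmono'⟩
  by_contra hne
  rcases lt_or_gt_of_ne hne with hlt | hgt
  · -- c' < c : pick x in (c', c); h strictly increasing near x but deriv h x < 0
    set x : ℝ := (c' + c) / 2 with hxdef
    have hx1 : c' < x := by simp only [hxdef]; linarith
    have hx2 : x < c := by simp only [hxdef]; linarith
    have hxI : x ∈ Icc 0 b := ⟨(hc'mem.1.trans hx1).le, (hx2.trans_le hcble).le⟩
    have hxIoo : x ∈ Ioo c' b := ⟨hx1, hx2.trans_le hcble⟩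
    have hLneg : deriv h x < 0 := hderivneg x hxI (hneg x hxI hx2)
    have hL : HasDerivAt h (deriv h x) x := by
      rw [(hderiv x hxI).deriv]; exact hderiv x hxI
    have : (0:ℝ) ≤ deriv h x := by
      refine deriv_nonneg_of_slope hL (le_refl _) ?_
      have hopen : Ioo c' b ∈ 𝓝 x := isOpen_Ioo.mem_nhds hxIoo
      filter_upwards [diff_mem_nhdsWithin_compl hopen {x}] with y hy
      have hyIoo : y ∈ Ioo c' b := hy.1
      have hyne : y ≠ x := by simpa using hy.2
      rcases hyne.lt_or_gt with h1 | h1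
      · have := hmono' hyIoo hxIoo h1
        rw [slope_def_field]
        exact le_of_lt (div_pos_of_neg_of_neg (by linarith) (by linarith))
      · have := hmono' hxIoo hyIoo h1
        rw [slope_def_field]
        exact le_of_lt (div_pos (by linarith) (by linarith))
    linarith
  · -- c < c' : pick x in (c, c'); h strictly decreasing near x but deriv h x > 0
    set x : ℝ := (c + c') / 2 with hxdef
    have hx1 : c < x := by simp only [hxdef]; linarith
    have hx2 : x < c' := by simp only [hxdef]; linarith
    have hxI : x ∈ Icc 0 b := ⟨(hcmem.1.trans hx1).le, (hx2.trans hc'mem.2).le⟩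
    have hxIoo : x ∈ Ioo 0 c' := ⟨hcmem.1.trans hx1, hx2⟩
    have hLpos : 0 < deriv h x := hderivpos x hxI (hpos x hxI hx1)
    have hL : HasDerivAt h (deriv h x) x := by
      rw [(hderiv x hxI).deriv]; exact hderiv x hxI
    have : deriv h x ≤ 0 := by
      refine deriv_nonpos_of_slope hL (le_refl _) ?_
      have hopen : Ioo 0 c' ∈ 𝓝 x := isOpen_Ioo.mem_nhds hxIoo
      filter_upwards [diff_mem_nhdsWithin_compl hopen {x}] with y hy
      have hyIoo : y ∈ Ioo 0 c' := hy.1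
      have hyne : y ≠ x := by simpa using hy.2
      rcases hyne.lt_or_gt with h1 | h1
      · have := hanti' hyIoo hxIoo h1
        rw [slope_def_field]
        exact le_of_lt (div_neg_of_pos_of_neg (by linarith) (by linarith))
      · have := hanti' hxIoo hyIoo h1
        rw [slope_def_field]
        exact le_of_lt (div_neg_of_neg_of_pos (by linarith) (by linarith))
    linarith
end

section
/- Let 0 < b < ∞ and let f, g : [0, b] → ℝ be continuous functions that are differentiable on (0, b), with g(x) > 0 and g'(x) < 0 for all x ∈ (0, b), g(b) = 0, and f(b) ≤ 0. If the function x ↦ f'(x)/g'(x) is strictly decreasing on (0, b), then the function x ↦ f(x)/g(x) is strictly decreasing on (0, b). -/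
/-- Corollary 2, case (1): for a positive decreasing denominator `g` with
`g b = 0` and `f b ≤ 0`, strict decrease of `f'/g'` on `(0, b)` forces strict
decrease of `f/g` on `(0, b)`. -/
theorem corollary2_case1
    (b : ℝ) (hb : 0 < b) (f g : ℝ → ℝ)
    (hfc : ContinuousOn f (Set.Icc 0 b)) (hgc : ContinuousOn g (Set.Icc 0 b))
    (hfd : ∀ x ∈ Set.Ioo 0 b, DifferentiableAt ℝ f x)
    (hgd : ∀ x ∈ Set.Ioo 0 b, DifferentiableAt ℝ g x)
    (hgpos : ∀ x ∈ Set.Ioo 0 b, 0 < g x)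
    (hg'neg : ∀ x ∈ Set.Ioo 0 b, deriv g x < 0)
    (hgb : g b = 0) (hfb : f b ≤ 0)
    (hanti : StrictAntiOn (fun x => deriv f x / deriv g x) (Set.Ioo 0 b)) :
    StrictAntiOn (fun x => f x / g x) (Set.Ioo 0 b) := by
  intro x hx y hy hxy
  have hgx : 0 < g x := hgpos x hx
  have hgy : 0 < g y := hgpos y hy
  -- Cauchy MVT on [y, b]
  have hsub1 : Set.Icc y b ⊆ Set.Icc 0 b := Set.Icc_subset_Icc hy.1.le le_rfl
  have hsub1' : Set.Ioo y b ⊆ Set.Ioo 0 b := Set.Ioo_subset_Ioo hy.1.le le_rfl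
  obtain ⟨c, hc, hceq⟩ := exists_ratio_deriv_eq_ratio_slope f hy.2 (hfc.mono hsub1)
    (fun t ht => (hfd t (hsub1' ht)).differentiableWithinAt) g (hgc.mono hsub1)
    (fun t ht => (hgd t (hsub1' ht)).differentiableWithinAt)
  have hc' : c ∈ Set.Ioo 0 b := hsub1' hc
  have hg'c : deriv g c < 0 := hg'neg c hc'
  rw [hgb] at hceq
  -- key1 : deriv f c / deriv g c = (f y - f b) / g y
  have key1 : deriv f c / deriv g c = (f y - f b) / g y := by
    rw [div_eq_div_iff (ne_of_lt hg'c) (ne_of_gt hgy)]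
    linear_combination -hceq
  have h1 : f y / g y ≤ deriv f c / deriv g c := by
    rw [key1, div_le_div_iff₀ hgy hgy]
    nlinarith
  -- Cauchy MVT on [x, y]
  have hsub2 : Set.Icc x y ⊆ Set.Icc 0 b := Set.Icc_subset_Icc hx.1.le hy.2.le
  have hsub2' : Set.Ioo x y ⊆ Set.Ioo 0 b := Set.Ioo_subset_Ioo hx.1.le hy.2.le
  obtain ⟨t, ht, hteq⟩ := exists_ratio_deriv_eq_ratio_slope f hxy (hfc.mono hsub2)
    (fun s hs => (hfd s (hsub2' hs)).differentiableWithinAt) g (hgc.mono hsub2)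
    (fun s hs => (hgd s (hsub2' hs)).differentiableWithinAt)
  have ht' : t ∈ Set.Ioo 0 b := hsub2' ht
  have hg't : deriv g t < 0 := hg'neg t ht'
  -- g is decreasing: g y - g x < 0
  obtain ⟨s, hs, hseq⟩ := exists_deriv_eq_slope g hxy (hgc.mono hsub2)
    (fun s hs => (hgd s (hsub2' hs)).differentiableWithinAt)
  have hgdec : g y - g x < 0 := by
    have h := hg'neg s (hsub2' hs)
    rw [hseq, div_lt_iff₀ (by linarith : (0:ℝ) < y - x)] at h
    linarith
  -- strict inequality from hanti
  have h2 : deriv f c / deriv g c < deriv f t / deriv g t := hanti ht' hc' (lt_trans ht.2 hc.1)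
  set r := deriv f t / deriv g t with hr
  have hkey : f y / g y < r := lt_of_le_of_lt h1 h2
  have hratio : f y - f x = r * (g y - g x) := by
    rw [hr, div_mul_eq_mul_div, eq_div_iff (ne_of_lt hg't)]
    linear_combination -hteq
  -- conclude
  have hfy : f y < r * g y := (div_lt_iff₀ hgy).mp hkey
  have hz : f x * g y - f y * g x = (g y - g x) * (f y - r * g y) := by
    linear_combination (-(g y)) * hratio
  have hprod : 0 < (g y - g x) * (f y - r * g y) :=
    mul_pos_of_neg_of_neg hgdec (by linarith)
  show f y / g y < f x / g x
  rw [div_lt_div_iff₀ hgy hgx]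
  linarith
end

section
/- Let h(x) = ∫₀ˣ exp(−t²) dt and define k₁(x) = h(x²)/h(x) for x > 0. Then there exists c ∈ (0, ∞) such that k₁ is strictly increasing on (0, c] and strictly decreasing on [c, ∞); in particular, k₁ changes monotonicity exactly once on (0, ∞) and attains a unique global maximum. -/
open Real intervalIntegral Set Filter Topology

noncomputable def Hh (x : ℝ) : ℝ := ∫ t in (0:ℝ)..x, Real.exp (-t^2)

lemma contE : Continuous fun t : ℝ => Real.exp (-t^2) := by continuity

lemma Hh_hasDerivAt (x : ℝ) : HasDerivAt Hh (Real.exp (-x^2)) x :=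
  intervalIntegral.integral_hasDerivAt_right
    (contE.intervalIntegrable _ _) (contE.stronglyMeasurableAtFilter _ _) contE.continuousAt

lemma Hh_cont : Continuous Hh :=
  continuous_iff_continuousAt.2 fun x => (Hh_hasDerivAt x).continuousAt

lemma Hh_pos {x : ℝ} (hx : 0 < x) : 0 < Hh x :=
  intervalIntegral.intervalIntegral_pos_of_pos (contE.intervalIntegrable _ _)
    (fun t => Real.exp_pos _) hx

lemma Hh_le {x : ℝ} (hx : 0 ≤ x) : Hh x ≤ x := by
  have := intervalIntegral.integral_mono_on hx (contE.intervalIntegrable 0 x)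
    (_root_.intervalIntegrable_const (c := (1:ℝ)) (μ := MeasureTheory.volume)) (fun t _ => by
      rw [← Real.exp_zero]; exact Real.exp_le_exp.2 (by nlinarith [sq_nonneg t]))
  simpa [Hh] using this

lemma Hh_ge {x : ℝ} (hx : 0 ≤ x) : x * Real.exp (-x^2) ≤ Hh x := by
  have := intervalIntegral.integral_mono_on hx
    (_root_.intervalIntegrable_const (c := Real.exp (-x^2)) (μ := MeasureTheory.volume)) (contE.intervalIntegrable 0 x)
    (fun t ht => Real.exp_le_exp.2 (by nlinarith [ht.1, ht.2, sq_nonneg t]))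
  simpa [Hh, mul_comm] using this

lemma Hh_mono {a b : ℝ} (ha : 0 ≤ a) (hab : a ≤ b) : Hh a ≤ Hh b := by
  have h1 : Hh b - Hh a = ∫ t in a..b, Real.exp (-t^2) := by
    rw [Hh, Hh, ← intervalIntegral.integral_interval_sub_left
      (contE.intervalIntegrable 0 b) (contE.intervalIntegrable 0 a)]
  nlinarith [intervalIntegral.integral_nonneg (μ := MeasureTheory.volume) hab (fun t _ => (Real.exp_pos (-t^2)).le), h1]

noncomputable def Dd (x : ℝ) : ℝ :=
  2*x*Real.exp (-(x^2)^2) * Hh x - Real.exp (-x^2) * Hh (x^2)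

lemma Dd_cont : Continuous Dd := by
  unfold Dd
  have := Hh_cont
  fun_prop

lemma sq_hasDerivAt (x : ℝ) : HasDerivAt (fun y : ℝ => y^2) (2*x) x := by
  simpa using hasDerivAt_pow 2 x

lemma Hsq_hasDerivAt (x : ℝ) :
    HasDerivAt (fun y : ℝ => Hh (y^2)) (Real.exp (-(x^2)^2) * (2*x)) x := by
  have := (Hh_hasDerivAt (x^2)).comp x (sq_hasDerivAt x); exact this

lemma e2_hasDerivAt (x : ℝ) :
    HasDerivAt (fun y : ℝ => Real.exp (-y^2)) (Real.exp (-x^2) * (-(2*x))) x := by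
  have h : HasDerivAt (fun y : ℝ => -y^2) (-(2*x)) x := (sq_hasDerivAt x).neg
  exact (Real.hasDerivAt_exp _).comp x h

lemma e4_hasDerivAt (x : ℝ) :
    HasDerivAt (fun y : ℝ => Real.exp (-(y^2)^2)) (Real.exp (-(x^2)^2) * (-(2*(x^2)) * (2*x))) x := by
  have h : HasDerivAt (fun y : ℝ => -(y^2)^2) (-(2*(x^2)) * (2*x)) x := by
    have := ((sq_hasDerivAt (x^2)).comp x (sq_hasDerivAt x)).neg
    simpa [Function.comp_def, Pi.neg_def] using this
  exact (Real.hasDerivAt_exp _).comp x h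

lemma Dd_hasDerivAt (x : ℝ) :
    HasDerivAt Dd
      (2*Real.exp (-(x^2)^2) * Hh x * (1 - 4*x^4) + 2*x*Real.exp (-x^2) * Hh (x^2)) x := by
  have h1 : HasDerivAt (fun y : ℝ => 2*y*Real.exp (-(y^2)^2) * Hh y)
      ((2*Real.exp (-(x^2)^2) + 2*x*(Real.exp (-(x^2)^2) * (-(2*(x^2)) * (2*x)))) * Hh x
        + 2*x*Real.exp (-(x^2)^2) * Real.exp (-x^2)) x := by
    have ha : HasDerivAt (fun y : ℝ => 2*y*Real.exp (-(y^2)^2))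
        (2*Real.exp (-(x^2)^2) + 2*x*(Real.exp (-(x^2)^2) * (-(2*(x^2)) * (2*x)))) x := by
      have := ((hasDerivAt_id x).const_mul 2).mul (e4_hasDerivAt x)
      simpa [Pi.mul_def, mul_comm, mul_assoc, mul_left_comm] using this
    simpa [Pi.mul_def] using ha.mul (Hh_hasDerivAt x)
  have h2 : HasDerivAt (fun y : ℝ => Real.exp (-y^2) * Hh (y^2))
      ((Real.exp (-x^2) * (-(2*x))) * Hh (x^2) + Real.exp (-x^2) * (Real.exp (-(x^2)^2) * (2*x))) x :=
    (e2_hasDerivAt x).mul (Hsq_hasDerivAt x)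
  have := h1.sub h2
  refine this.congr_deriv ?_
  ring

lemma k1_hasDerivAt {x : ℝ} (hx : Hh x ≠ 0) :
    HasDerivAt (fun y : ℝ => Hh (y^2) / Hh y) (Dd x / (Hh x)^2) x := by
  have := (Hsq_hasDerivAt x).div (Hh_hasDerivAt x) hx
  refine this.congr_deriv ?_
  unfold Dd
  ring

lemma Dd_pos_small {x : ℝ} (h0 : 0 < x) (h1 : x ≤ 0.91) : 0 < Dd x := by
  have hx4 : (x^2)^2 < Real.log 2 := by
    have h4 : (x^2)^2 ≤ (0.91:ℝ)^4 := by
      have := pow_le_pow_left₀ h0.le h1 4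
      nlinarith [this]
    have : (0.91:ℝ)^4 < Real.log 2 := by
      have := Real.log_two_gt_d9
      nlinarith
    linarith
  have he : (1:ℝ)/2 < Real.exp (-(x^2)^2) := by
    have : Real.exp (-Real.log 2) < Real.exp (-(x^2)^2) :=
      Real.exp_lt_exp.2 (by linarith)
    rwa [Real.exp_neg, Real.exp_log (by norm_num : (0:ℝ) < 2), show ((2:ℝ))⁻¹ = 1/2 by norm_num]
      at this
  have hHge : x * Real.exp (-x^2) ≤ Hh x := Hh_ge h0.le
  have hHle : Hh (x^2) ≤ x^2 := Hh_le (sq_nonneg x)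
  have he2 : 0 < Real.exp (-x^2) := Real.exp_pos _
  have he4 : 0 < Real.exp (-(x^2)^2) := Real.exp_pos _
  have key : x^2 * Real.exp (-x^2) * (2 * Real.exp (-(x^2)^2) - 1) > 0 := by
    apply mul_pos (mul_pos (by positivity) he2)
    linarith
  unfold Dd
  nlinarith [mul_le_mul_of_nonneg_left hHle he2.le,
    mul_le_mul_of_nonneg_left hHge (by positivity : (0:ℝ) ≤ 2*x*Real.exp (-(x^2)^2))]

lemma Dd_neg_two : Dd 2 < 0 := by
  have h2 : Hh 2 ≤ 2 := Hh_le (by norm_num)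
  have h1 : Real.exp (-1^2) ≤ Hh 1 := by simpa using Hh_ge (by norm_num : (0:ℝ) ≤ 1)
  have h14 : Hh 1 ≤ Hh 4 := Hh_mono (by norm_num) (by norm_num)
  have hHh4 : Real.exp (-1) ≤ Hh (2^2) := by
    norm_num at h1 ⊢; linarith
  unfold Dd
  have key : 2*2*Real.exp (-(2^2:ℝ)^2) * Hh 2 < Real.exp (-(2:ℝ)^2) * Hh (2^2) := by
    have hl : 2*2*Real.exp (-(2^2:ℝ)^2) * Hh 2 ≤ 8 * Real.exp (-16) := by
      have h16 : (-(2^2:ℝ)^2) = (-16:ℝ) := by norm_num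
      rw [h16]
      nlinarith [Real.exp_pos (-16:ℝ)]
    have hr : Real.exp (-(4:ℝ)) * Real.exp (-1) ≤ Real.exp (-(2:ℝ)^2) * Hh (2^2) := by
      have := mul_le_mul_of_nonneg_left hHh4 (Real.exp_pos (-(4:ℝ))).le
      norm_num at this ⊢; linarith
    have hmid : (8:ℝ) * Real.exp (-16) < Real.exp (-4) * Real.exp (-1) := by
      rw [← Real.exp_add]
      have : Real.exp (-16) * Real.exp 11 = Real.exp (-4 + -1) := by
        rw [← Real.exp_add]; norm_num
      have h11 : (12:ℝ) ≤ Real.exp 11 := by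
        have := Real.add_one_le_exp (11:ℝ); linarith
      nlinarith [Real.exp_pos (-16:ℝ)]
    linarith
  linarith

lemma Dd_deriv_neg {x : ℝ} (hx : 0.91 ≤ x) (hz : Dd x = 0) :
    2*Real.exp (-(x^2)^2) * Hh x * (1 - 4*x^4) + 2*x*Real.exp (-x^2) * Hh (x^2) < 0 := by
  have hx0 : (0:ℝ) < x := by linarith
  have hH : 0 < Hh x := Hh_pos hx0
  have he4 : 0 < Real.exp (-(x^2)^2) := Real.exp_pos _
  have heq : Real.exp (-x^2) * Hh (x^2) = 2*x*Real.exp (-(x^2)^2) * Hh x := by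
    unfold Dd at hz; linarith
  have : 2*x*Real.exp (-x^2) * Hh (x^2) = 2*x*(2*x*Real.exp (-(x^2)^2) * Hh x) := by
    rw [← heq]; ring
  rw [this]
  have hq : 1 + 2*x^2 - 4*x^4 < 0 := by
    have hy : (0.8281:ℝ) ≤ x^2 := by nlinarith
    nlinarith [sq_nonneg (x^2 - 0.8281), hy]
  nlinarith [mul_pos he4 hH]

lemma slope_ev {z : ℝ} (hx : (0.91:ℝ) ≤ z) (hz : Dd z = 0) :
    ∀ᶠ x in 𝓝[≠] z, Dd x / (x - z) < 0 := by
  have hslope : Tendsto (slope Dd z) (𝓝[≠] z)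
      (𝓝 (2*Real.exp (-(z^2)^2) * Hh z * (1 - 4*z^4) + 2*z*Real.exp (-z^2) * Hh (z^2))) :=
    hasDerivAt_iff_tendsto_slope.1 (Dd_hasDerivAt z)
  have hev : ∀ᶠ x in 𝓝[≠] z, slope Dd z x < 0 :=
    hslope.eventually_lt_const (Dd_deriv_neg hx hz)
  refine hev.mono fun x h => ?_
  rwa [slope_def_field, hz, sub_zero] at h

lemma pos_before {z : ℝ} (hx : (0.91:ℝ) ≤ z) (hz : Dd z = 0) :
    ∀ᶠ x in 𝓝[<] z, 0 < Dd x := by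
  have hev := (slope_ev hx hz).filter_mono
    (nhdsWithin_mono z (fun x (h : x ∈ Iio z) => ne_of_lt h))
  have hlt : ∀ᶠ x in 𝓝[<] z, x < z := eventually_mem_nhdsWithin
  filter_upwards [hev, hlt] with x h1 h2
  by_contra hcon
  push_neg at hcon
  have hd : x - z < 0 := by linarith
  nlinarith [div_nonneg_iff.2 (Or.inr ⟨hcon, hd.le⟩)]

lemma neg_after {z : ℝ} (hx : (0.91:ℝ) ≤ z) (hz : Dd z = 0) :
    ∀ᶠ x in 𝓝[>] z, Dd x < 0 := by
  have hev := (slope_ev hx hz).filter_mono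
    (nhdsWithin_mono z (fun x (h : x ∈ Ioi z) => ne_of_gt h))
  have hlt : ∀ᶠ x in 𝓝[>] z, z < x := eventually_mem_nhdsWithin
  filter_upwards [hev, hlt] with x h1 h2
  nlinarith [div_lt_iff₀ (by linarith : (0:ℝ) < x - z) |>.1 h1]

lemma exists_c : ∃ c : ℝ, 0.91 < c ∧ (∀ x, 0 < x → x < c → 0 < Dd x) ∧
    (∀ x, c < x → Dd x < 0) := by
  set B : Set ℝ := {x | 0.91 ≤ x ∧ Dd x ≤ 0} with hB
  have hBne : B.Nonempty := ⟨2, by norm_num, Dd_neg_two.le⟩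
  have hBbdd : BddBelow B := ⟨0.91, fun x hx => hx.1⟩
  have hBclosed : IsClosed B := by
    have : B = Ici (0.91:ℝ) ∩ Dd ⁻¹' (Iic 0) := by
      ext x; simp [hB, Set.mem_setOf_eq, and_comm]
    rw [this]
    exact isClosed_Ici.inter (isClosed_Iic.preimage Dd_cont)
  set c := sInf B with hc
  have hcB : c ∈ B := hBclosed.csInf_mem hBne hBbdd
  have hc91 : 0.91 ≤ c := hcB.1
  have hcgt : 0.91 < c := by
    rcases eq_or_lt_of_le hc91 with h | h
    · exfalso; have := Dd_pos_small (by norm_num : (0:ℝ) < 0.91) le_rfl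
      rw [h] at this; linarith [hcB.2]
    · exact h
  -- positivity below c
  have hpos : ∀ x, 0 < x → x < c → 0 < Dd x := by
    intro x hx0 hxc
    rcases le_or_gt x 0.91 with h | h
    · exact Dd_pos_small hx0 h
    · by_contra hcon
      push_neg at hcon
      have : x ∈ B := ⟨h.le, hcon⟩
      have := csInf_le hBbdd this
      linarith
  -- Dd c = 0
  have hDc : Dd c = 0 := by
    rcases lt_trichotomy (Dd c) 0 with h | h | h
    · exfalso
      have htend : Tendsto Dd (𝓝[<] c) (𝓝 (Dd c)) :=
        (Dd_cont.continuousAt).tendsto.mono_left nhdsWithin_le_nhds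
      have hev : ∀ᶠ x in 𝓝[<] c, 0 ≤ Dd x := by
        filter_upwards [Ioo_mem_nhdsLT_of_mem (show c ∈ Ioc 0.91 c from ⟨hcgt, le_rfl⟩)]
          with x hx
        exact (hpos x (by linarith [hx.1]) hx.2).le
      have := ge_of_tendsto htend hev
      linarith
    · exact h
    · linarith [hcB.2]
  refine ⟨c, hcgt, hpos, ?_⟩
  -- negativity above c
  intro y hy
  by_contra hcon
  push_neg at hcon
  set A : Set ℝ := {x | c < x ∧ 0 ≤ Dd x} with hA
  have hAne : A.Nonempty := ⟨y, hy, hcon⟩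
  have hAbdd : BddBelow A := ⟨c, fun x hx => hx.1.le⟩
  set z := sInf A with hz
  have hzc : c ≤ z := le_csInf hAne (fun x hx => hx.1.le)
  have hneg_mid : ∀ x, c < x → x < z → Dd x < 0 := by
    intro x h1 h2
    by_contra hcon2
    push_neg at hcon2
    have : x ∈ A := ⟨h1, hcon2⟩
    linarith [csInf_le hAbdd this]
  rcases eq_or_lt_of_le hzc with hzc' | hzc'
  · -- z = c : Dd < 0 just after c, but A has points arbitrarily close
    have hafter := neg_after hc91 hDc
    rcases mem_nhdsGT_iff_exists_Ioo_subset.1 hafter with ⟨u, hu, hsub⟩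
    rcases (csInf_lt_iff hAbdd hAne).1 (by rw [← hz, ← hzc']; exact hu) with ⟨a, haA, ha⟩
    have : Dd a < 0 := hsub ⟨haA.1, ha⟩
    linarith [haA.2]
  · -- z > c
    have hDz_le : Dd z ≤ 0 := by
      have htend : Tendsto Dd (𝓝[<] z) (𝓝 (Dd z)) :=
        (Dd_cont.continuousAt).tendsto.mono_left nhdsWithin_le_nhds
      have hev : ∀ᶠ x in 𝓝[<] z, Dd x ≤ 0 := by
        filter_upwards [Ioo_mem_nhdsLT_of_mem (show z ∈ Ioc c z from ⟨hzc', le_rfl⟩)] with x hx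
        exact (hneg_mid x hx.1 hx.2).le
      exact le_of_tendsto htend hev
    have hDz_ge : 0 ≤ Dd z := by
      by_contra hcon2
      push_neg at hcon2
      have hopen : ∀ᶠ x in 𝓝 z, Dd x < 0 :=
        (Dd_cont.continuousAt.tendsto).eventually_lt_const hcon2
      rcases Metric.eventually_nhds_iff.1 hopen with ⟨ε, hε, hball⟩
      rcases (csInf_lt_iff hAbdd hAne).1 (by linarith : sInf A < z + ε) with ⟨a, haA, ha⟩
      have hza : z ≤ a := csInf_le hAbdd haA
      have : Dd a < 0 := hball (by rw [Real.dist_eq]; rw [abs_lt]; constructor <;> linarith)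
      linarith [haA.2]
    have hDz : Dd z = 0 := le_antisymm hDz_le hDz_ge
    have hz91 : (0.91:ℝ) ≤ z := by linarith
    have := pos_before hz91 hDz
    rcases ((this.and (Ioo_mem_nhdsLT_of_mem
      (show z ∈ Ioc c z from ⟨hzc', le_rfl⟩))).exists) with ⟨w, hw1, hw2⟩
    exact absurd hw1 (not_lt.2 (hneg_mid w hw2.1 hw2.2).le)

/-- With `h x = ∫₀ˣ exp(−t²) dt`, the function `k₁ x = h(x²)/h(x)` is strictly
increasing on `(0, c]` and strictly decreasing on `[c, ∞)` for some `c > 0`. -/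
theorem k1_unique_max :
    ∃ c ∈ Set.Ioi (0:ℝ),
      StrictMonoOn
        (fun x : ℝ => (∫ t in (0:ℝ)..(x ^ 2), Real.exp (-t ^ 2)) /
          (∫ t in (0:ℝ)..x, Real.exp (-t ^ 2))) (Set.Ioc 0 c) ∧
      StrictAntiOn
        (fun x : ℝ => (∫ t in (0:ℝ)..(x ^ 2), Real.exp (-t ^ 2)) /
          (∫ t in (0:ℝ)..x, Real.exp (-t ^ 2))) (Set.Ici c) := by
  obtain ⟨c, hc91, hpos, hneg⟩ := exists_c
  have hc0 : (0:ℝ) < c := by linarith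
  have hfun : (fun x : ℝ => (∫ t in (0:ℝ)..(x ^ 2), Real.exp (-t ^ 2)) /
      (∫ t in (0:ℝ)..x, Real.exp (-t ^ 2))) = fun x : ℝ => Hh (x^2) / Hh x := rfl
  refine ⟨c, hc0, ?_, ?_⟩
  · rw [hfun]
    apply strictMonoOn_of_deriv_pos (convex_Ioc 0 c)
    · apply ContinuousOn.div
      · exact (Hh_cont.comp (continuous_pow 2)).continuousOn
      · exact Hh_cont.continuousOn
      · intro x hx
        exact (Hh_pos hx.1).ne'
    · intro x hx
      rw [interior_Ioc] at hx
      have hH : Hh x ≠ 0 := (Hh_pos hx.1).ne'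
      rw [(k1_hasDerivAt hH).deriv]
      exact div_pos (hpos x hx.1 hx.2) (pow_pos (Hh_pos hx.1) 2)
  · rw [hfun]
    apply strictAntiOn_of_deriv_neg (convex_Ici c)
    · apply ContinuousOn.div
      · exact (Hh_cont.comp (continuous_pow 2)).continuousOn
      · exact Hh_cont.continuousOn
      · intro x hx
        exact (Hh_pos (lt_of_lt_of_le hc0 hx)).ne'
    · intro x hx
      rw [interior_Ici] at hx
      have hx0 : 0 < x := lt_trans hc0 hx
      have hH : Hh x ≠ 0 := (Hh_pos hx0).ne'
      rw [(k1_hasDerivAt hH).deriv]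
      exact div_neg_of_neg_of_pos (hneg x hx) (pow_pos (Hh_pos hx0) 2)
end

section
/- Let h(x) = ∫₀ˣ exp(−t²) dt and define k₂(x) = h(x²)/(x·h(x)) for x > 0. Then there exists c ∈ (0, ∞) such that k₂ is strictly increasing on (0, c] and strictly decreasing on [c, ∞); in particular, k₂ changes monotonicity exactly once on (0, ∞) and attains a unique global maximum. -/
open Real Set Filter Topology

noncomputable def K2.h (x : ℝ) : ℝ := ∫ t in (0:ℝ)..x, Real.exp (-t ^ 2)

namespace K2

open intervalIntegral in
lemma contE : Continuous fun t : ℝ => Real.exp (-t ^ 2) := by continuity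

lemma hasDerivAt_h (x : ℝ) : HasDerivAt h (Real.exp (-x ^ 2)) x :=
  (contE.integral_hasStrictDerivAt 0 x).hasDerivAt

lemma h_pos {x : ℝ} (hx : 0 < x) : 0 < h x := by
  apply intervalIntegral.intervalIntegral_pos_of_pos (f := fun t => Real.exp (-t ^ 2))
  · exact contE.intervalIntegrable 0 x
  · intro t; exact Real.exp_pos _
  · exact hx

lemma h_mono : Monotone h := by
  intro a b hab
  have key : h b - h a = ∫ t in a..b, Real.exp (-t ^ 2) := by
    rw [h, h, intervalIntegral.integral_interval_sub_left
      (contE.intervalIntegrable 0 b) (contE.intervalIntegrable 0 a)]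
  nlinarith [intervalIntegral.integral_nonneg (μ := MeasureTheory.volume)
    (f := fun t : ℝ => Real.exp (-t ^ 2)) hab (fun u _ => (Real.exp_pos _).le), key]

/-! exp bounds -/

lemma exp_neg_ge (s : ℝ) : 1 - s ≤ Real.exp (-s) := by
  have := Real.add_one_le_exp (-s); linarith

lemma exp_ge_poly {s : ℝ} (hs : 0 ≤ s) :
    1 + s + s ^ 2 / 2 + s ^ 3 / 6 + s ^ 4 / 24 ≤ Real.exp s := by
  have h := Real.sum_le_exp_of_nonneg hs 5
  have he : ∑ i ∈ Finset.range 5, s ^ i / i.factorial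
      = 1 + s + s ^ 2 / 2 + s ^ 3 / 6 + s ^ 4 / 24 := by
    simp [Finset.sum_range_succ, Nat.factorial]
  linarith [he ▸ h]

lemma exp_neg_le2 {s : ℝ} (hs : 0 ≤ s) : Real.exp (-s) ≤ 1 - s + s ^ 2 / 2 := by
  have h1 : 1 + s + s ^ 2 / 2 ≤ Real.exp s := by
    nlinarith [exp_ge_poly hs, pow_nonneg hs 3, pow_nonneg hs 4]
  have hP : (0:ℝ) < 1 - s + s ^ 2 / 2 := by nlinarith
  rw [Real.exp_neg, inv_le_iff_one_le_mul₀ (Real.exp_pos s)]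
  calc (1:ℝ) ≤ (1 - s + s ^ 2 / 2) * (1 + s + s ^ 2 / 2) := by nlinarith [pow_nonneg hs 4]
    _ ≤ (1 - s + s ^ 2 / 2) * Real.exp s := mul_le_mul_of_nonneg_left h1 hP.le

lemma exp_neg_le4 {s : ℝ} (hs : 0 ≤ s) (hs2 : s ≤ 1) :
    Real.exp (-s) ≤ 1 - s + s ^ 2 / 2 - s ^ 3 / 6 + s ^ 4 / 24 := by
  have h1 := exp_ge_poly hs
  have hP : (0:ℝ) < 1 - s + s ^ 2 / 2 - s ^ 3 / 6 + s ^ 4 / 24 := by nlinarith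
  rw [Real.exp_neg, inv_le_iff_one_le_mul₀ (Real.exp_pos s)]
  calc (1:ℝ) ≤ (1 - s + s ^ 2 / 2 - s ^ 3 / 6 + s ^ 4 / 24) *
        (1 + s + s ^ 2 / 2 + s ^ 3 / 6 + s ^ 4 / 24) := by
        nlinarith [pow_nonneg hs 6, pow_nonneg hs 8]
    _ ≤ _ := mul_le_mul_of_nonneg_left h1 hP.le

lemma exp_neg_ge5 {s : ℝ} (h0 : 0 ≤ s) (h1 : s ≤ 1) :
    1 - s + s ^ 2 / 2 - s ^ 3 / 6 + s ^ 4 / 24 - s ^ 5 / 100 ≤ Real.exp (-s) := by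
  have hb := Real.exp_bound (x := -s) (by rw [abs_neg, abs_of_nonneg h0]; exact h1)
    (n := 5) (by norm_num)
  have hsum : ∑ i ∈ Finset.range 5, (-s) ^ i / i.factorial
      = 1 - s + s ^ 2 / 2 - s ^ 3 / 6 + s ^ 4 / 24 := by
    simp [Finset.sum_range_succ, Nat.factorial]; ring
  rw [hsum, abs_neg, abs_of_nonneg h0] at hb
  have habs := abs_le.1 hb
  have : (5:ℕ).succ / ((5:ℕ).factorial * (5:ℕ) : ℝ) = 1/100 := by norm_num [Nat.factorial]
  rw [this] at habs
  nlinarith [habs.1]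

/-! h bounds -/

open intervalIntegral in
lemma h_low {y : ℝ} (hy : 0 ≤ y) : y - y ^ 3 / 3 ≤ h y := by
  have hint : (∫ t in (0:ℝ)..y, (1 - t ^ 2)) = y - y ^ 3 / 3 := by
    rw [integral_sub intervalIntegrable_const (intervalIntegrable_pow 2)]
    simp [integral_pow]; norm_num
  rw [← hint, h]
  apply integral_mono_on hy
  · exact (continuous_const.sub (continuous_pow 2)).intervalIntegrable 0 y
  · exact contE.intervalIntegrable 0 y
  · intro t _
    have := Real.add_one_le_exp (-t ^ 2); linarith

open intervalIntegral in
lemma h_up {y : ℝ} (hy : 0 ≤ y) : h y ≤ y - y ^ 3 / 3 + y ^ 5 / 10 := by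
  have hint : (∫ t in (0:ℝ)..y, (1 - t ^ 2 + t ^ 4 / 2)) = y - y ^ 3 / 3 + y ^ 5 / 10 := by
    rw [integral_add ((by fun_prop : Continuous fun t : ℝ => 1 - t ^ 2).intervalIntegrable 0 y)
      (((continuous_pow 4).div_const 2).intervalIntegrable 0 y),
      integral_sub intervalIntegrable_const (intervalIntegrable_pow 2), integral_div]
    simp [integral_pow]; norm_num; ring
  rw [← hint, h]
  apply integral_mono_on hy
  · exact contE.intervalIntegrable 0 y
  · exact ((continuous_const.sub (continuous_pow 2)).add
      ((continuous_pow 4).div_const 2)).intervalIntegrable 0 y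
  · intro t _
    calc Real.exp (-t ^ 2) ≤ 1 - t ^ 2 + (t ^ 2) ^ 2 / 2 := by
          have := exp_neg_le2 (s := t ^ 2) (sq_nonneg t); linarith
      _ = 1 - t ^ 2 + t ^ 4 / 2 := by ring

open intervalIntegral in
lemma h1_low : 1 - 1/3 + 1/10 - 1/42 + 1/216 - 1/1100 ≤ h 1 := by
  have hint : (∫ t in (0:ℝ)..1, (1 - t^2 + (1/2)*t^4 + ((-1/6)*t^6 + ((1/24)*t^8 + (-1/100)*t^10))))
      = 1 - 1/3 + 1/10 - 1/42 + 1/216 - 1/1100 := by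
    have ii : ∀ (c : ℝ) (n : ℕ), IntervalIntegrable (fun t : ℝ => c * t ^ n)
        MeasureTheory.volume 0 1 :=
      fun c n => (continuous_const.mul (continuous_pow n)).intervalIntegrable 0 1
    rw [show (fun t : ℝ => 1 - t^2 + (1/2)*t^4 + ((-1/6)*t^6 + ((1/24)*t^8 + (-1/100)*t^10)))
        = fun t : ℝ => 1 + ((-1)*t^2 + ((1/2)*t^4 + ((-1/6)*t^6 + ((1/24)*t^8 + (-1/100)*t^10))))
        from funext fun t => by ring]
    rw [integral_add intervalIntegrable_const
        ((ii _ _).add ((ii _ _).add ((ii _ _).add ((ii _ _).add (ii _ _))))),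
      integral_add (ii _ _) ((ii _ _).add ((ii _ _).add ((ii _ _).add (ii _ _)))),
      integral_add (ii _ _) ((ii _ _).add ((ii _ _).add (ii _ _))),
      integral_add (ii _ _) ((ii _ _).add (ii _ _)),
      integral_add (ii _ _) (ii _ _),
      integral_const_mul, integral_const_mul, integral_const_mul, integral_const_mul,
      integral_const_mul]
    simp [integral_pow]
    norm_num
  rw [← hint, h]
  apply integral_mono_on (by norm_num)
  · exact (by continuity : Continuous fun t : ℝ =>
      1 - t^2 + (1/2)*t^4 + ((-1/6)*t^6 + ((1/24)*t^8 + (-1/100)*t^10))).intervalIntegrable 0 1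
  · exact contE.intervalIntegrable 0 1
  · intro t ht
    have h0 : 0 ≤ t ^ 2 := sq_nonneg t
    have h1 : t ^ 2 ≤ 1 := by
      rcases ht with ⟨ht0, ht1⟩; nlinarith
    have := exp_neg_ge5 h0 h1
    nlinarith [this]

/-! the functions -/

noncomputable def u (y : ℝ) : ℝ := y * Real.exp (-y ^ 2) / h y
noncomputable def G (x : ℝ) : ℝ := 2 * u (x ^ 2) - u x - 1
noncomputable def k (x : ℝ) : ℝ := h (x ^ 2) / (x * h x)

lemma u_pos {y : ℝ} (hy : 0 < y) : 0 < u y :=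
  div_pos (mul_pos hy (Real.exp_pos _)) (h_pos hy)

lemma D1_pos (y : ℝ) : 0 < 1 - y ^ 2 / 3 + y ^ 4 / 10 := by
  nlinarith [sq_nonneg (y ^ 2 - 5/3), sq_nonneg y]

lemma u_low {y : ℝ} (hy : 0 < y) :
    Real.exp (-y ^ 2) / (1 - y ^ 2 / 3 + y ^ 4 / 10) ≤ u y := by
  have hD := D1_pos y
  have hh := h_pos hy
  rw [u, div_le_div_iff₀ hD hh]
  have hup := h_up hy.le
  nlinarith [Real.exp_pos (-y ^ 2), mul_le_mul_of_nonneg_left hup (Real.exp_pos (-y ^ 2)).le]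

lemma u_up {y : ℝ} (hy : 0 < y) (hy1 : y ≤ 1) :
    u y ≤ Real.exp (-y ^ 2) / (1 - y ^ 2 / 3) := by
  have hD : (0:ℝ) < 1 - y ^ 2 / 3 := by nlinarith
  have hh := h_pos hy
  rw [u, div_le_div_iff₀ hh hD]
  have hlow := h_low hy.le
  nlinarith [Real.exp_pos (-y ^ 2), mul_le_mul_of_nonneg_left hlow (Real.exp_pos (-y ^ 2)).le]

/-! derivatives -/

lemma hasDerivAt_negsq (y : ℝ) : HasDerivAt (fun t : ℝ => Real.exp (-t ^ 2))
    (Real.exp (-y ^ 2) * (-(2 * y))) y := by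
  have h1 : HasDerivAt (fun t : ℝ => -t ^ 2) (-(2 * y)) y := by
    simpa using ((hasDerivAt_pow 2 y).fun_neg)
  exact h1.exp

lemma hasDerivAt_u {y : ℝ} (hy : 0 < y) :
    HasDerivAt u (u y / y * (1 - 2 * y ^ 2 - u y)) y := by
  have hnum : HasDerivAt (fun t : ℝ => t * Real.exp (-t ^ 2))
      (Real.exp (-y ^ 2) * (1 - 2 * y ^ 2)) y := by
    have := (hasDerivAt_id y).fun_mul (hasDerivAt_negsq y)
    simp only [id_eq, one_mul] at this
    refine this.congr_deriv ?_; ring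
  have hq := hnum.fun_div (hasDerivAt_h y) (ne_of_gt (h_pos hy))
  refine hq.congr_deriv ?_
  have hh := ne_of_gt (h_pos hy)
  simp only [u]
  field_simp

lemma hasDerivAt_G {x : ℝ} (hx : 0 < x) :
    HasDerivAt G ((4 * u (x ^ 2) * (1 - 2 * x ^ 4 - u (x ^ 2))
      - u x * (1 - 2 * x ^ 2 - u x)) / x) x := by
  have hx2 : (0:ℝ) < x ^ 2 := by positivity
  have h1 : HasDerivAt (fun t : ℝ => u (t ^ 2))
      (u (x ^ 2) / x ^ 2 * (1 - 2 * (x ^ 2) ^ 2 - u (x ^ 2)) * (2 * x)) x := by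
    have hinner : HasDerivAt (fun t : ℝ => t ^ 2) (2 * x) x := by
      simpa using hasDerivAt_pow 2 x
    have h1' := HasDerivAt.comp (h := fun t : ℝ => t ^ 2) (h₂ := u) (x := x)
      (hasDerivAt_u hx2) hinner
    simpa [Function.comp_def] using h1'
  have h2 := ((h1.const_mul 2).fun_sub (hasDerivAt_u hx)).sub_const 1
  refine h2.congr_deriv ?_
  have hxne := ne_of_gt hx
  field_simp
  ring

lemma hasDerivAt_k {x : ℝ} (hx : 0 < x) :
    HasDerivAt k (k x * G x / x) x := by
  have hx2 : (0:ℝ) < x ^ 2 := by positivity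
  have hh1 := h_pos hx
  have hh2 := h_pos hx2
  have hnum : HasDerivAt (fun t : ℝ => h (t ^ 2)) (Real.exp (-(x ^ 2) ^ 2) * (2 * x)) x := by
    have hinner : HasDerivAt (fun t : ℝ => t ^ 2) (2 * x) x := by
      simpa using hasDerivAt_pow 2 x
    have h1' := HasDerivAt.comp (h := fun t : ℝ => t ^ 2) (h₂ := h) (x := x)
      (hasDerivAt_h (x ^ 2)) hinner
    simpa [Function.comp_def] using h1'
  have hden : HasDerivAt (fun t : ℝ => t * h t) (h x + x * Real.exp (-x ^ 2)) x := by
    have := (hasDerivAt_id x).fun_mul (hasDerivAt_h x)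
    simp only [id_eq, one_mul] at this
    convert this using 1
  have hdne : x * h x ≠ 0 := by positivity
  have hq := hnum.fun_div hden hdne
  refine hq.congr_deriv ?_
  rw [k, G, u, u]
  field_simp
  ring

/-! sign of G -/

lemma A_core {s A B : ℝ} (hs0 : 0 < s) (hs1 : s ≤ 0.3364)
    (hA : (1 - s ^ 2) / (1 - s ^ 2 / 3 + s ^ 4 / 10) ≤ A)
    (hB : B ≤ (1 - s + s ^ 2/2 - s ^ 3/6 + s ^ 4/24) / (1 - s / 3)) :
    0 < 2 * A - B - 1 := by
  have hD1 := D1_pos s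
  have hD2 : (0:ℝ) < 1 - s / 3 := by nlinarith
  have key : (1 - s + s ^ 2/2 - s ^ 3/6 + s ^ 4/24) / (1 - s / 3) + 1
      < 2 * ((1 - s ^ 2) / (1 - s ^ 2 / 3 + s ^ 4 / 10)) := by
    rw [div_add' _ _ _ hD2.ne', show 2 * ((1 - s ^ 2) / (1 - s ^ 2 / 3 + s ^ 4 / 10))
      = (2 * (1 - s ^ 2)) / (1 - s ^ 2 / 3 + s ^ 4 / 10) by ring,
      div_lt_div_iff₀ hD2 hD1]
    nlinarith [sq_nonneg s, pow_nonneg hs0.le 3, pow_nonneg hs0.le 4, pow_nonneg hs0.le 5,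
      pow_nonneg hs0.le 6, pow_nonneg hs0.le 7, pow_nonneg hs0.le 8,
      mul_pos hs0 (sub_pos.2 (lt_of_le_of_lt hs1 (by norm_num : (0.3364:ℝ) < 0.34)))]
  linarith

lemma G_pos {x : ℝ} (hx : 0 < x) (hx1 : x ≤ 29/50) : 0 < G x := by
  set s := x ^ 2 with hs
  have hs0 : 0 < s := by positivity
  have hs1 : s ≤ 0.3364 := by rw [hs]; nlinarith
  have hs2 : (0:ℝ) < x ^ 2 := hs0
  -- lower bound for u (x^2)
  have hu2 : (1 - s ^ 2) / (1 - s ^ 2 / 3 + s ^ 4 / 10) ≤ u (x ^ 2) := by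
    refine le_trans ?_ (u_low hs2)
    have hD := D1_pos s
    rw [show (x ^ 2) ^ 2 = s ^ 2 by rw [hs], show (x^2) = s from hs.symm]
    gcongr
    exact exp_neg_ge _
  -- upper bound for u x
  have hu1 : u x ≤ (1 - s + s ^ 2/2 - s ^ 3/6 + s ^ 4/24) / (1 - s / 3) := by
    refine le_trans (u_up hx (by linarith)) ?_
    have hD : (0:ℝ) < 1 - s / 3 := by nlinarith
    rw [show x ^ 2 = s from hs.symm]
    gcongr
    · exact exp_neg_le4 hs0.le (by linarith)
  have key := A_core hs0 hs1 hu2 hu1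
  rw [G, show x ^ 2 = s from hs.symm]
  linarith

lemma G_neg_far {x : ℝ} (hx : 1 ≤ x) : G x < 0 := by
  have hx0 : 0 < x := by linarith
  have hx2 : (1:ℝ) ≤ x ^ 2 := by nlinarith
  have hx20 : (0:ℝ) < x ^ 2 := by positivity
  have h1p : 0 < h 1 := h_pos one_pos
  -- u (x^2) ≤ exp(-1) / h 1
  have hnum : x ^ 2 * Real.exp (-(x ^ 2) ^ 2) ≤ Real.exp (-1) := by
    set y := x ^ 2
    have hy1 : (1:ℝ) ≤ y := hx2
    have hexp : y ≤ Real.exp (y ^ 2 - 1) := by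
      have := Real.add_one_le_exp (y ^ 2 - 1)
      nlinarith
    have : y * Real.exp (-y ^ 2) ≤ Real.exp (y ^ 2 - 1) * Real.exp (-y ^ 2) := by
      apply mul_le_mul_of_nonneg_right hexp (Real.exp_pos _).le
    calc y * Real.exp (-y ^ 2) ≤ Real.exp (y ^ 2 - 1) * Real.exp (-y ^ 2) := this
      _ = Real.exp (-1) := by rw [← Real.exp_add]; ring_nf
  have hu2 : u (x ^ 2) ≤ Real.exp (-1) / h 1 := by
    rw [u, div_le_div_iff₀ (h_pos hx20) h1p]
    have hmono : h 1 ≤ h (x ^ 2) := h_mono hx2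
    nlinarith [mul_le_mul_of_nonneg_left hmono
      (mul_nonneg (hx20.le) (Real.exp_pos (-(x ^ 2) ^ 2)).le), Real.exp_pos (-1:ℝ),
      mul_le_mul_of_nonneg_right hnum h1p.le]
  have hexp1 : Real.exp (-1:ℝ) < 0.3679 := by
    rw [Real.exp_neg]
    rw [inv_lt_iff_one_lt_mul₀ (Real.exp_pos 1)]
    nlinarith [Real.exp_one_gt_d9]
  have h1b : (0.7465:ℝ) < h 1 := by
    have := h1_low; nlinarith
  have : 2 * u (x ^ 2) < 1 := by
    have : u (x ^ 2) < 1/2 := by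
      calc u (x ^ 2) ≤ Real.exp (-1) / h 1 := hu2
        _ < 1/2 := by
            rw [div_lt_iff₀ h1p]
            nlinarith
    linarith
  have := u_pos hx0
  rw [G]; linarith

lemma Gderiv_neg {x : ℝ} (hxa : 29/50 ≤ x) (hx1 : x < 1) (hz : G x = 0) :
    (4 * u (x ^ 2) * (1 - 2 * x ^ 4 - u (x ^ 2))
      - u x * (1 - 2 * x ^ 2 - u x)) / x < 0 := by
  have hx0 : 0 < x := lt_of_lt_of_le (by norm_num) hxa
  have hs0 : (0:ℝ) < x ^ 2 := by positivity
  have hsa : (0.3364:ℝ) ≤ x ^ 2 := by nlinarith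
  have hs1 : x ^ 2 < 1 := by nlinarith
  have hu1 : u x = 2 * u (x ^ 2) - 1 := by rw [G] at hz; linarith
  set s := x ^ 2 with hs
  have hD1 := D1_pos s
  have hQ : (0:ℝ) < 4 * s ^ 2 - 2 * s + 1 := by nlinarith [sq_nonneg (2 * s - 1)]
  have hu2low : (1 - s ^ 2) / (1 - s ^ 2 / 3 + s ^ 4 / 10) ≤ u (x ^ 2) := by
    refine le_trans ?_ (u_low hs0)
    rw [show (x ^ 2) ^ 2 = s ^ 2 by rw [hs], show (x ^ 2) = s from hs.symm]
    gcongr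
    exact exp_neg_ge _
  have key : 1 - s < u (x ^ 2) * (4 * s ^ 2 - 2 * s + 1) := by
    have step1 : 1 - s < (1 - s ^ 2) / (1 - s ^ 2 / 3 + s ^ 4 / 10) * (4 * s ^ 2 - 2 * s + 1) := by
      rw [div_mul_eq_mul_div, lt_div_iff₀ hD1]
      have hfac : (1 - s ^ 2) * (4 * s ^ 2 - 2 * s + 1) - (1 - s) * (1 - s ^ 2 / 3 + s ^ 4 / 10)
          = (1 - s) * s * (4 * s ^ 2 + 7/3 * s - 1 - s ^ 3 / 10) := by ring
      nlinarith [mul_pos (mul_pos (sub_pos.2 hs1) (lt_of_lt_of_le (by norm_num) hsa))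
        (show (0:ℝ) < 4 * s ^ 2 + 7/3 * s - 1 - s ^ 3 / 10 by
          nlinarith [sq_nonneg (s - 0.3364),
            pow_le_one₀ (le_trans (by norm_num) hsa : (0:ℝ) ≤ s) hs1.le (n := 3)])]
    calc 1 - s < (1 - s ^ 2) / (1 - s ^ 2 / 3 + s ^ 4 / 10) * (4 * s ^ 2 - 2 * s + 1) := step1
      _ ≤ u (x ^ 2) * (4 * s ^ 2 - 2 * s + 1) := by
          exact mul_le_mul_of_nonneg_right hu2low hQ.le
  apply div_neg_of_neg_of_pos _ hx0
  have hnum : 4 * u (x ^ 2) * (1 - 2 * x ^ 4 - u (x ^ 2)) - u x * (1 - 2 * x ^ 2 - u x)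
      = 2 * (u (x ^ 2) * (2 * x ^ 2 - 4 * x ^ 4 - 1) + 1 - x ^ 2) := by
    rw [hu1]; ring
  have hx4 : x ^ 4 = s ^ 2 := by rw [hs]; ring
  rw [hnum, hx4, show x ^ 2 = s from hs.symm]
  nlinarith [key]

lemma left_pos {x d : ℝ} (hd : HasDerivAt G d x) (hneg : d < 0) (hz : G x = 0) :
    ∀ᶠ t in 𝓝[<] x, 0 < G t := by
  have hslope := hasDerivAt_iff_tendsto_slope.1 hd
  have hev : ∀ᶠ t in 𝓝[≠] x, slope G x t < 0 := hslope.eventually_lt_const hneg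
  have hle : 𝓝[<] x ≤ 𝓝[≠] x := nhdsWithin_mono x fun t ht => ne_of_lt ht
  filter_upwards [hev.filter_mono hle, self_mem_nhdsWithin] with t hslt (htx : t ∈ Iio x)
  rw [slope_def_field, hz] at hslt
  have htx' : t - x < 0 := by simp only [mem_Iio] at htx; linarith
  rcases div_neg_iff.1 hslt with ⟨h1, h2⟩ | ⟨h1, h2⟩
  · linarith
  · linarith

lemma right_neg {x d : ℝ} (hd : HasDerivAt G d x) (hneg : d < 0) (hz : G x = 0) :
    ∀ᶠ t in 𝓝[>] x, G t < 0 := by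
  have hslope := hasDerivAt_iff_tendsto_slope.1 hd
  have hev : ∀ᶠ t in 𝓝[≠] x, slope G x t < 0 := hslope.eventually_lt_const hneg
  have hle : 𝓝[>] x ≤ 𝓝[≠] x := nhdsWithin_mono x fun t ht => ne_of_gt ht
  filter_upwards [hev.filter_mono hle, self_mem_nhdsWithin] with t hslt (htx : t ∈ Ioi x)
  rw [slope_def_field, hz] at hslt
  have htx' : 0 < t - x := by simp only [mem_Ioi] at htx; linarith
  rcases div_neg_iff.1 hslt with ⟨h1, h2⟩ | ⟨h1, h2⟩
  · linarith
  · linarith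

lemma k_pos {x : ℝ} (hx : 0 < x) : 0 < k x :=
  div_pos (h_pos (by positivity)) (mul_pos hx (h_pos hx))

lemma exists_c : ∃ c : ℝ, 0 < c ∧ (∀ x, 0 < x → x < c → 0 < G x) ∧ G c = 0 ∧
    (∀ x, c < x → G x < 0) := by
  set a : ℝ := 29/50 with ha
  have ha0 : (0:ℝ) < a := by norm_num
  have hGcont : ∀ {p q : ℝ}, 0 < p → ContinuousOn G (Icc p q) := fun {p q} hp =>
    fun x hx => ((hasDerivAt_G (lt_of_lt_of_le hp hx.1)).continuousAt).continuousWithinAt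
  set S : Set ℝ := Icc a 1 ∩ G ⁻¹' (Iic 0) with hSdef
  have hS1 : (1:ℝ) ∈ S := ⟨⟨by norm_num, le_refl 1⟩, (G_neg_far le_rfl).le⟩
  have hSbdd : BddBelow S := ⟨a, fun x hx => hx.1.1⟩
  have hSclosed : IsClosed S :=
    (hGcont ha0).preimage_isClosed_of_isClosed isClosed_Icc isClosed_Iic
  set c : ℝ := sInf S with hcdef
  have hcS : c ∈ S := hSclosed.csInf_mem ⟨1, hS1⟩ hSbdd
  have hca : a ≤ c := hcS.1.1
  have hc1 : c ≤ 1 := hcS.1.2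
  have hGc_le : G c ≤ 0 := hcS.2
  have hGa : 0 < G a := G_pos ha0 le_rfl
  have hac : a < c := by
    rcases lt_or_eq_of_le hca with h | h
    · exact h
    · exfalso; rw [← h] at hGc_le; linarith
  have hc0 : 0 < c := lt_trans ha0 hac
  have hGc : G c = 0 := by
    by_contra hne
    have hlt : G c < 0 := lt_of_le_of_ne hGc_le hne
    have hIVT := intermediate_value_Ioo' (le_of_lt hac) (hGcont ha0 (q := c))
    have h0mem : (0:ℝ) ∈ Ioo (G c) (G a) := ⟨hlt, hGa⟩
    obtain ⟨z, hz, hGz⟩ := hIVT h0mem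
    have hzS : z ∈ S := ⟨⟨hz.1.le, le_trans hz.2.le hc1⟩, hGz.le⟩
    exact absurd (csInf_le hSbdd hzS) (not_le.2 hz.2)
  have hc_lt1 : c < 1 := by
    rcases lt_or_eq_of_le hc1 with h | h
    · exact h
    · exfalso; rw [h] at hGc; exact (G_neg_far le_rfl).ne hGc
  refine ⟨c, hc0, ?_, hGc, ?_⟩
  · intro x hx0 hxc
    by_cases hxa : x ≤ a
    · exact G_pos hx0 hxa
    · push_neg at hxa
      by_contra hcon
      push_neg at hcon
      have hxS : x ∈ S := ⟨⟨hxa.le, le_trans hxc.le hc1⟩, hcon⟩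
      exact absurd (csInf_le hSbdd hxS) (not_le.2 hxc)
  · intro x hcx
    by_cases hx1 : 1 ≤ x
    · exact G_neg_far hx1
    push_neg at hx1
    by_contra hcon
    push_neg at hcon
    -- G < 0 just right of c
    have hdC := hasDerivAt_G hc0
    have hdCneg := Gderiv_neg hca hc_lt1 hGc
    have hev := right_neg hdC hdCneg hGc
    have hIoo : Ioo c x ∈ 𝓝[>] c := Ioo_mem_nhdsGT_of_mem ⟨le_refl c, hcx⟩
    obtain ⟨q, hqneg, hqmem⟩ := (hev.and hIoo).exists
    have hq0 : 0 < q := lt_trans hc0 hqmem.1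
    -- T and its inf
    set T : Set ℝ := Icc q x ∩ G ⁻¹' (Ici 0) with hTdef
    have hTx : x ∈ T := ⟨⟨hqmem.2.le, le_rfl⟩, hcon⟩
    have hTbdd : BddBelow T := ⟨q, fun t ht => ht.1.1⟩
    have hTclosed : IsClosed T :=
      (hGcont hq0).preimage_isClosed_of_isClosed isClosed_Icc isClosed_Ici
    set w : ℝ := sInf T with hwdef
    have hwT : w ∈ T := hTclosed.csInf_mem ⟨x, hTx⟩ hTbdd
    have hqw : q < w := by
      rcases lt_or_eq_of_le hwT.1.1 with h | h
      · exact h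
      · exfalso; have := hwT.2; rw [← h] at this; exact absurd this (not_le.2 hqneg)
    have hw0 : 0 < w := lt_trans hq0 hqw
    have hneg_before : ∀ t, q ≤ t → t < w → G t < 0 := by
      intro t ht1 ht2
      rcases eq_or_lt_of_le ht1 with h | h
      · rw [← h]; exact hqneg
      · by_contra hcon2
        push_neg at hcon2
        have htT : t ∈ T := ⟨⟨ht1, le_trans ht2.le hwT.1.2⟩, hcon2⟩
        exact absurd (csInf_le hTbdd htT) (not_le.2 ht2)
    have hGw_le : G w ≤ 0 := by
      have htend : Tendsto G (𝓝[<] w) (𝓝 (G w)) :=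
        ((hasDerivAt_G hw0).continuousAt).tendsto.mono_left nhdsWithin_le_nhds
      have hev2 : ∀ᶠ t in 𝓝[<] w, G t ≤ 0 := by
        filter_upwards [Ioo_mem_nhdsLT_of_mem ⟨hqw, le_refl w⟩] with t ht
        exact (hneg_before t ht.1.le ht.2).le
      exact le_of_tendsto htend hev2
    have hGw : G w = 0 := le_antisymm hGw_le hwT.2
    have hwa : (29:ℝ)/50 ≤ w := le_trans hca (le_trans hqmem.1.le hqw.le)
    have hw1 : w < 1 := lt_of_le_of_lt hwT.1.2 hx1
    have hdWneg := Gderiv_neg hwa hw1 hGw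
    have hevL := left_pos (hasDerivAt_G hw0) hdWneg hGw
    have hIoo2 : Ioo q w ∈ 𝓝[<] w := Ioo_mem_nhdsLT_of_mem ⟨hqw, le_refl w⟩
    obtain ⟨t, htpos, htmem⟩ := (hevL.and hIoo2).exists
    exact absurd htpos (not_lt.2 (hneg_before t htmem.1.le htmem.2).le)

end K2

/-- With `h x = ∫₀ˣ exp(−t²) dt`, the function `k₂ x = h(x²)/(x·h(x))` is strictly
increasing on `(0, c]` and strictly decreasing on `[c, ∞)` for some `c > 0`. -/
theorem k2_unique_max :
    ∃ c ∈ Set.Ioi (0:ℝ),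
      StrictMonoOn
        (fun x : ℝ => (∫ t in (0:ℝ)..(x ^ 2), Real.exp (-t ^ 2)) /
          (x * ∫ t in (0:ℝ)..x, Real.exp (-t ^ 2))) (Set.Ioc 0 c) ∧
      StrictAntiOn
        (fun x : ℝ => (∫ t in (0:ℝ)..(x ^ 2), Real.exp (-t ^ 2)) /
          (x * ∫ t in (0:ℝ)..x, Real.exp (-t ^ 2))) (Set.Ici c) := by
  obtain ⟨c, hc0, hpos, hzero, hneg⟩ := K2.exists_c
  have hfun : (fun x : ℝ => (∫ t in (0:ℝ)..(x ^ 2), Real.exp (-t ^ 2)) /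
      (x * ∫ t in (0:ℝ)..x, Real.exp (-t ^ 2))) = K2.k := rfl
  rw [hfun]
  refine ⟨c, hc0, ?_, ?_⟩
  · apply strictMonoOn_of_deriv_pos (convex_Ioc 0 c)
    · exact fun x hx => ((K2.hasDerivAt_k hx.1).continuousAt).continuousWithinAt
    · intro x hx
      rw [interior_Ioc] at hx
      rw [(K2.hasDerivAt_k hx.1).deriv]
      exact div_pos (mul_pos (K2.k_pos hx.1) (hpos x hx.1 hx.2)) hx.1
  · apply strictAntiOn_of_deriv_neg (convex_Ici c)
    · exact fun x hx => ((K2.hasDerivAt_k (lt_of_lt_of_le hc0 hx)).continuousAt).continuousWithinAt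
    · intro x hx
      rw [interior_Ici] at hx
      have hx0 : 0 < x := lt_trans hc0 hx
      rw [(K2.hasDerivAt_k hx0).deriv]
      exact div_neg_of_neg_of_pos (mul_neg_of_pos_of_neg (K2.k_pos hx0) (hneg x hx)) hx0
end

section
/- Let h(x) = ∫₀ˣ exp(−t²) dt and define k₃(x) = (h(x) − x·exp(−x²))/x² for x > 0. Then k₃ is strictly increasing on the interval (0, 0.967857163]. -/
open Real Set MeasureTheory intervalIntegral Finset

noncomputable def hfun (x : ℝ) : ℝ := ∫ t in (0:ℝ)..x, Real.exp (-t ^ 2)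

lemma contf : Continuous fun t : ℝ => Real.exp (-t ^ 2) := by continuity

lemma hfun_hasDeriv (x : ℝ) : HasDerivAt hfun (Real.exp (-x ^ 2)) x :=
  intervalIntegral.integral_hasDerivAt_right (contf.intervalIntegrable 0 x)
    (contf.stronglyMeasurableAtFilter _ _) contf.continuousAt

noncomputable def gfun (x : ℝ) : ℝ := (x ^ 3 + x) * Real.exp (-x ^ 2) - hfun x

lemma expneg_hasDeriv (x : ℝ) :
    HasDerivAt (fun x : ℝ => Real.exp (-x ^ 2)) (Real.exp (-x ^ 2) * (-(2 * x))) x := by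
  have h1 : HasDerivAt (fun x : ℝ => -x ^ 2) (-(2 * x)) x := by
    simpa using (hasDerivAt_pow 2 x).fun_neg
  exact h1.exp

lemma gfun_hasDeriv (x : ℝ) :
    HasDerivAt gfun (x ^ 2 * (1 - 2 * x ^ 2) * Real.exp (-x ^ 2)) x := by
  have hp : HasDerivAt (fun x : ℝ => x ^ 3 + x) (3 * x ^ 2 + 1) x := by
    simpa using (hasDerivAt_pow 3 x).fun_add (hasDerivAt_id x)
  have h2 := (hp.fun_mul (expneg_hasDeriv x)).fun_sub (hfun_hasDeriv x)
  convert h2 using 1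
  · rfl
  · rfl
  · rfl
  ring

lemma gfun_zero : gfun 0 = 0 := by
  simp [gfun, hfun]

lemma gfun_cont : Continuous gfun :=
  continuous_iff_continuousAt.2 fun x => (gfun_hasDeriv x).continuousAt

-- Numeric bounds --------------------------------------------------------

lemma c_abs : |(-(0.967857163 : ℝ) ^ 2)| ≤ 1 := by
  rw [abs_le]; norm_num

lemma exp_lower :
    (∑ m ∈ Finset.range 16, (-(0.967857163 : ℝ) ^ 2) ^ m / m.factorial)
      - (0.967857163 : ℝ) ^ 32 * (17 / (Nat.factorial 16 * 16))
      ≤ Real.exp (-(0.967857163 : ℝ) ^ 2) := by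
  have hb := Real.exp_bound c_abs (n := 16) (by norm_num)
  rw [abs_sub_le_iff] at hb
  have h2 := hb.2
  have habs : |(-(0.967857163 : ℝ) ^ 2)| ^ 16 = (0.967857163 : ℝ) ^ 32 := by
    rw [abs_neg, abs_of_nonneg (by positivity), ← pow_mul]
  rw [habs] at h2
  simp only [Nat.succ_eq_add_one] at h2
  push_cast at h2
  linarith [h2]

lemma exp_pointwise_upper {t : ℝ} (ht : t ∈ Set.Icc (0:ℝ) 0.967857163) :
    Real.exp (-t ^ 2) ≤ (∑ m ∈ Finset.range 16, (-t ^ 2) ^ m / m.factorial)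
      + t ^ 32 * (17 / (Nat.factorial 16 * 16)) := by
  obtain ⟨ht0, ht1⟩ := ht
  have habs : |(-t ^ 2)| ≤ 1 := by
    rw [abs_neg, abs_of_nonneg (by positivity)]
    nlinarith
  have hb := Real.exp_bound habs (n := 16) (by norm_num)
  rw [abs_sub_le_iff] at hb
  have h1 := hb.1
  have habs2 : |(-t ^ 2)| ^ 16 = t ^ 32 := by
    rw [abs_neg, abs_of_nonneg (by positivity), ← pow_mul]
  rw [habs2] at h1
  simp only [Nat.succ_eq_add_one] at h1
  push_cast at h1
  linarith [h1]

/-- Antiderivative of the upper-bound polynomial. -/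
noncomputable def Ffun (t : ℝ) : ℝ :=
  (∑ m ∈ Finset.range 16, (-1 : ℝ) ^ m * t ^ (2 * m + 1) / ((2 * m + 1) * m.factorial))
    + t ^ 33 * (17 / (Nat.factorial 16 * 16 * 33))

lemma Ffun_hasDeriv (t : ℝ) :
    HasDerivAt Ffun ((∑ m ∈ Finset.range 16, (-t ^ 2) ^ m / m.factorial)
      + t ^ 32 * (17 / (Nat.factorial 16 * 16))) t := by
  have hsum : HasDerivAt
      (fun t : ℝ => ∑ m ∈ Finset.range 16,
        (-1 : ℝ) ^ m * t ^ (2 * m + 1) / ((2 * m + 1) * m.factorial))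
      (∑ m ∈ Finset.range 16, (-t ^ 2) ^ m / m.factorial) t := by
    apply HasDerivAt.fun_sum
    intro m _
    have h1 : HasDerivAt (fun t : ℝ => (-1 : ℝ) ^ m * t ^ (2 * m + 1) / ((2 * m + 1) * m.factorial))
        ((-1 : ℝ) ^ m * ((2 * m + 1 : ℕ) * t ^ (2 * m)) / ((2 * m + 1) * m.factorial)) t := by
      simpa using ((hasDerivAt_pow (2 * m + 1) t).const_mul ((-1 : ℝ) ^ m)).div_const
        ((2 * m + 1) * m.factorial)
    convert h1 using 1
    · rfl
    · rfl
    have hm : (m.factorial : ℝ) ≠ 0 := Nat.cast_ne_zero.2 m.factorial_ne_zero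
    have h2m : ((2 * m + 1 : ℕ) : ℝ) ≠ 0 := Nat.cast_ne_zero.2 (by omega)
    have hneg : (-t ^ 2 : ℝ) ^ m = (-1 : ℝ) ^ m * t ^ (2 * m) := by
      rw [neg_pow, ← pow_mul]
    rw [hneg]
    push_cast
    field_simp
  have h2 : HasDerivAt (fun t : ℝ => t ^ 33 * (17 / (Nat.factorial 16 * 16 * 33)))
      (t ^ 32 * (17 / (Nat.factorial 16 * 16))) t := by
    have := (hasDerivAt_pow 33 t).mul_const ((17 : ℝ) / (Nat.factorial 16 * 16 * 33))
    convert this using 1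
    · rfl
    · rfl
    have : ((Nat.factorial 16 : ℝ)) ≠ 0 := Nat.cast_ne_zero.2 (Nat.factorial_ne_zero 16)
    field_simp
    ring
  exact hsum.add h2

lemma Ffun_zero : Ffun 0 = 0 := by
  unfold Ffun
  rw [Finset.sum_eq_zero]
  · norm_num
  · intro m _
    rw [zero_pow (by omega)]
    simp

lemma integral_upper :
    (∫ t in (0:ℝ)..0.967857163, Real.exp (-t ^ 2)) ≤ Ffun 0.967857163 := by
  have hcontP : Continuous fun t : ℝ =>
      (∑ m ∈ Finset.range 16, (-t ^ 2) ^ m / m.factorial)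
        + t ^ 32 * (17 / (Nat.factorial 16 * 16)) := by
    apply Continuous.add
    · exact continuous_finset_sum _ fun m _ => by continuity
    · continuity
  have hint : (∫ t in (0:ℝ)..0.967857163,
      ((∑ m ∈ Finset.range 16, (-t ^ 2) ^ m / m.factorial)
        + t ^ 32 * (17 / (Nat.factorial 16 * 16)))) = Ffun 0.967857163 - Ffun 0 :=
    intervalIntegral.integral_eq_sub_of_hasDerivAt (fun t _ => Ffun_hasDeriv t)
      (hcontP.intervalIntegrable _ _)
  rw [Ffun_zero, sub_zero] at hint
  rw [← hint]
  apply intervalIntegral.integral_mono_on (by norm_num)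
    (contf.intervalIntegrable _ _) (hcontP.intervalIntegrable _ _)
  intro t ht
  exact exp_pointwise_upper ht

set_option maxHeartbeats 4000000 in
lemma key_numeric :
    Ffun 0.967857163 < ((0.967857163 : ℝ) ^ 3 + 0.967857163) *
      ((∑ m ∈ Finset.range 16, (-(0.967857163 : ℝ) ^ 2) ^ m / m.factorial)
        - (0.967857163 : ℝ) ^ 32 * (17 / (Nat.factorial 16 * 16))) := by
  unfold Ffun
  simp only [Finset.sum_range_succ, Finset.sum_range_zero, Nat.factorial]
  norm_num

lemma gfun_c_pos : 0 < gfun 0.967857163 := by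
  have h1 := integral_upper
  have h2 := exp_lower
  have h3 := key_numeric
  have hc : (0:ℝ) < (0.967857163 : ℝ) ^ 3 + 0.967857163 := by norm_num
  unfold gfun hfun
  nlinarith [mul_le_mul_of_nonneg_left h2 hc.le]

-- Positivity of g on (0, c] ---------------------------------------------

lemma gfun_pos {x : ℝ} (hx : x ∈ Set.Ioc (0:ℝ) 0.967857163) : 0 < gfun x := by
  obtain ⟨hx0, hxc⟩ := hx
  set r : ℝ := Real.sqrt (1/2) with hr
  have hr_pos : 0 < r := Real.sqrt_pos.2 (by norm_num)
  have hr_lt_c : r < 0.967857163 := by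
    rw [hr, Real.sqrt_lt' (by norm_num)]
    norm_num
  rcases le_or_gt x r with hxr | hxr
  · -- strictly increasing on [0, r]
    have hmono : StrictMonoOn gfun (Set.Icc 0 r) := by
      apply strictMonoOn_of_deriv_pos (convex_Icc 0 r) gfun_cont.continuousOn
      intro y hy
      rw [interior_Icc] at hy
      rw [(gfun_hasDeriv y).deriv]
      have hy2 : y ^ 2 < 1 / 2 := by
        have h := hy.2
        rw [hr] at h
        exact (Real.lt_sqrt hy.1.le).mp h
      have hpos : 0 < 1 - 2 * y ^ 2 := by linarith
      exact mul_pos (mul_pos (pow_pos hy.1 2) hpos) (Real.exp_pos _)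
    have := hmono (Set.mem_Icc.2 ⟨le_refl 0, hr_pos.le⟩)
      (Set.mem_Icc.2 ⟨hx0.le, hxr⟩) hx0
    rwa [gfun_zero] at this
  · -- strictly decreasing on [r, c]
    have hanti : StrictAntiOn gfun (Set.Icc r 0.967857163) := by
      apply strictAntiOn_of_deriv_neg (convex_Icc _ _) gfun_cont.continuousOn
      intro y hy
      rw [interior_Icc] at hy
      rw [(gfun_hasDeriv y).deriv]
      have hy0 : 0 < y := lt_trans hr_pos hy.1
      have hy2 : 1 / 2 < y ^ 2 := by
        have := hy.1
        rw [hr, Real.sqrt_lt' hy0] at this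
        linarith
      have h1 : 1 - 2 * y ^ 2 < 0 := by linarith
      have h2 : (0:ℝ) < y ^ 2 * Real.exp (-y ^ 2) := by positivity
      nlinarith [Real.exp_pos (-y ^ 2), sq_nonneg y]
    rcases eq_or_lt_of_le hxc with heq | hlt
    · rw [heq]; exact gfun_c_pos
    · have := hanti (Set.mem_Icc.2 ⟨hxr.le, hxc⟩)
        (Set.mem_Icc.2 ⟨hr_lt_c.le, le_refl _⟩) hlt
      exact lt_trans gfun_c_pos this

-- Derivative of k₃ ------------------------------------------------------

lemma k3_hasDeriv {x : ℝ} (hx : x ≠ 0) :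
    HasDerivAt (fun x : ℝ => ((∫ t in (0:ℝ)..x, Real.exp (-t ^ 2)) - x * Real.exp (-x ^ 2)) /
      x ^ 2) (2 * gfun x / x ^ 3) x := by
  have hN : HasDerivAt (fun x : ℝ => hfun x - x * Real.exp (-x ^ 2))
      (Real.exp (-x ^ 2) - ((1 : ℝ) * Real.exp (-x ^ 2) + x * (Real.exp (-x ^ 2) * (-(2 * x))))) x :=
    (hfun_hasDeriv x).sub ((hasDerivAt_id x).mul (expneg_hasDeriv x))
  have hD : HasDerivAt (fun x : ℝ => x ^ 2) (2 * x) x := by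
    simpa using hasDerivAt_pow 2 x
  have hdiv := hN.fun_div hD (pow_ne_zero 2 hx)
  have heq : (fun x : ℝ => (hfun x - x * Real.exp (-x ^ 2)) / x ^ 2) =
      fun x : ℝ => ((∫ t in (0:ℝ)..x, Real.exp (-t ^ 2)) - x * Real.exp (-x ^ 2)) / x ^ 2 := rfl
  rw [heq] at hdiv
  convert hdiv using 1
  · rfl
  · rfl
  unfold gfun hfun
  field_simp
  ring

-- Main theorem ----------------------------------------------------------

/-- With `h x = ∫₀ˣ exp(−t²) dt`, the function
`k₃ x = (h x − x·exp(−x²))/x²` is strictly increasing on `(0, 0.967857163]`. -/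
theorem k3_strictMonoOn :
    StrictMonoOn
      (fun x : ℝ => ((∫ t in (0:ℝ)..x, Real.exp (-t ^ 2)) - x * Real.exp (-x ^ 2)) /
        x ^ 2)
      (Set.Ioc 0 (0.967857163 : ℝ)) := by
  apply strictMonoOn_of_deriv_pos (convex_Ioc _ _)
  · intro x hx
    exact (k3_hasDeriv (ne_of_gt hx.1)).continuousAt.continuousWithinAt
  · intro x hx
    rw [interior_Ioc] at hx
    rw [(k3_hasDeriv (ne_of_gt hx.1)).deriv]
    have hg := gfun_pos ⟨hx.1, hx.2.le⟩
    have hx3 : (0:ℝ) < x ^ 3 := pow_pos hx.1 3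
    exact div_pos (by linarith) hx3
end
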